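/- arXiv:2402.18739 — 5 statements merged into one kernel-verified Lean document; each statement's English description precedes it below -/
import Mathlib

section
/- Let G = (V, E) be a finite simple graph, and let z : E → [0, 1] be a weight function assigning to each edge e ∈ E a real weight z(e) in [0, 1]. Then there is a function x : E → {0, 1} such that for every vertex v ∈ V: (Σ_{e ∋ v} z(e)) − 1 < Σ_{e ∋ v} x(e) ≤ (Σ_{e ∋ v} z(e)) + 1, where the sums range over all edges of G incident with v. -/
open Finset
namespace AlonWei

variable {V : Type*} [Fintype V] [DecidableEq V] {G : SimpleGraph V} [DecidableRel G.Adj]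

noncomputable def Fr (G : SimpleGraph V) [DecidableRel G.Adj] (y : Sym2 V → ℝ) : Finset (Sym2 V) :=
  G.edgeFinset.filter fun e => 0 < y e ∧ y e < 1

noncomputable def dF (G : SimpleGraph V) [DecidableRel G.Adj] (y : Sym2 V → ℝ) (v : V) : ℕ :=
  (G.incidenceFinset v ∩ Fr G y).card
noncomputable def Yv (G : SimpleGraph V) [DecidableRel G.Adj] (y : Sym2 V → ℝ) (v : V) : ℝ :=
  ∑ e ∈ G.incidenceFinset v, y e
noncomputable def fs (G : SimpleGraph V) [DecidableRel G.Adj] (y : Sym2 V → ℝ) (v : V) : ℝ :=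
  ∑ e ∈ G.incidenceFinset v ∩ Fr G y, y e

def Inv (G : SimpleGraph V) [DecidableRel G.Adj] (z y : Sym2 V → ℝ) : Prop :=
  (∀ e ∈ G.edgeFinset, 0 ≤ y e ∧ y e ≤ 1) ∧
  (∀ v, 2 ≤ dF G y v → Yv G y v = Yv G z v) ∧
  (∀ v, dF G y v = 1 → Yv G y v - Yv G z v - fs G y v ∈ Set.Ioo (-1 : ℝ) 0) ∧
  (∀ v, dF G y v = 0 → Yv G y v - Yv G z v ∈ Set.Ioc (-1 : ℝ) 1)

lemma mem_Fr {y : Sym2 V → ℝ} {e : Sym2 V} :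
    e ∈ Fr G y ↔ e ∈ G.edgeFinset ∧ 0 < y e ∧ y e < 1 := by
  simp [Fr]

lemma mem_inc {v : V} {e : Sym2 V} :
    e ∈ G.incidenceFinset v ↔ e ∈ G.edgeFinset ∧ v ∈ e := by
  simp [SimpleGraph.mem_incidenceFinset, SimpleGraph.incidenceSet, SimpleGraph.mem_edgeFinset]

/-- the conclusion of the main lemma -/
def Concl (z : Sym2 V → ℝ) (G : SimpleGraph V) [DecidableRel G.Adj] : Prop :=
  ∃ x : Sym2 V → ℕ, (∀ e, x e = 0 ∨ x e = 1) ∧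
    ∀ v : V, Yv G (fun e => (x e : ℝ)) v - Yv G z v ∈ Set.Ioc (-1 : ℝ) 1

lemma base {z y : Sym2 V → ℝ} (hI : Inv G z y) (h : Fr G y = ∅) : Concl z G := by
  classical
  refine ⟨fun e => if 1 ≤ y e then 1 else 0, fun e => by by_cases h : 1 ≤ y e <;> simp [h], ?_⟩
  intro v
  have hy : ∀ e ∈ G.incidenceFinset v,
      ((if 1 ≤ y e then (1:ℕ) else 0 : ℕ) : ℝ) = y e := by
    intro e he
    have heE : e ∈ G.edgeFinset := (mem_inc.1 he).1
    have h01 := hI.1 e heE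
    have : ¬(0 < y e ∧ y e < 1) := by
      intro hc
      have : e ∈ Fr G y := mem_Fr.2 ⟨heE, hc⟩
      simp [h] at this
    by_cases h0 : 1 ≤ y e
    · simp [h0]; linarith [h01.2]
    · simp [h0]
      rcases lt_or_ge 0 (y e) with h1 | h1
      · exact absurd ⟨h1, lt_of_not_ge h0⟩ this
      · linarith [h01.1]
  have hY : Yv G (fun e => ((if 1 ≤ y e then (1:ℕ) else 0 : ℕ) : ℝ)) v = Yv G y v := by
    unfold Yv; exact Finset.sum_congr rfl hy
  rw [hY]
  have hd : dF G y v = 0 := by simp [dF, h]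
  exact hI.2.2.2 v hd

lemma kernel_step {z y : Sym2 V → ℝ} (hI : Inv G z y)
    (d : Sym2 V → ℝ) (hsupp : ∀ e, e ∉ Fr G y → d e = 0) (hne : ∃ e, d e ≠ 0)
    (hrow : ∀ v, 2 ≤ dF G y v → ∑ e ∈ G.incidenceFinset v, d e = 0) :
    ∃ y', Inv G z y' ∧ (Fr G y').card < (Fr G y).card := by
  classical
  obtain ⟨ew, hew⟩ := hne
  set T : Finset (Sym2 V) := (Fr G y).filter (fun e => d e ≠ 0) with hTdef
  have hT : T.Nonempty := by
    refine ⟨ew, ?_⟩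
    have : ew ∈ Fr G y := by
      by_contra h; exact hew (hsupp ew h)
    simp [hTdef, this, hew]
  set slack : Sym2 V → ℝ := fun e => if 0 < d e then (1 - y e) / d e else y e / (-d e)
    with hslack
  set t : ℝ := T.inf' hT slack with htdef
  have hmemT : ∀ e ∈ T, e ∈ Fr G y ∧ d e ≠ 0 := by
    intro e he; simpa [hTdef] using he
  have ht_pos : 0 < t := by
    rw [htdef, Finset.lt_inf'_iff]
    intro e he
    obtain ⟨hf, hd⟩ := hmemT e he
    obtain ⟨-, h0, h1⟩ := mem_Fr.1 hf
    by_cases hdd : 0 < d e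
    · simp only [hslack, if_pos hdd]
      exact div_pos (by linarith) hdd
    · have hdn : d e < 0 := lt_of_le_of_ne (not_lt.1 hdd) hd
      simp only [hslack, if_neg hdd]
      exact div_pos h0 (by linarith)
  have hle : ∀ e ∈ T, t ≤ slack e := fun e he => Finset.inf'_le slack he
  set y' : Sym2 V → ℝ := fun e => y e + t * d e with hy'
  -- per-edge bounds
  have h01 : ∀ e ∈ G.edgeFinset, 0 ≤ y' e ∧ y' e ≤ 1 := by
    intro e he
    by_cases hd : d e = 0
    · simp [hy', hd]; exact hI.1 e he
    · have hf : e ∈ Fr G y := by by_contra h; exact hd (hsupp e h)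
      have heT : e ∈ T := by simp [hTdef, hf, hd]
      obtain ⟨-, h0, h1⟩ := mem_Fr.1 hf
      have hts := hle e heT
      by_cases hdd : 0 < d e
      · rw [hslack] at hts; simp only [if_pos hdd] at hts
        have : t * d e ≤ 1 - y e := by
          rw [div_eq_mul_inv] at hts
          calc t * d e ≤ ((1 - y e) * (d e)⁻¹) * d e := by
                exact mul_le_mul_of_nonneg_right hts (le_of_lt hdd)
          _ = 1 - y e := by field_simp
        constructor
        · have : 0 ≤ t * d e := le_of_lt (mul_pos ht_pos hdd)
          simp only [hy']; linarith
        · simp only [hy']; linarith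
      · have hdn : d e < 0 := lt_of_le_of_ne (not_lt.1 hdd) hd
        rw [hslack] at hts; simp only [if_neg hdd] at hts
        have : -(t * d e) ≤ y e := by
          have := mul_le_mul_of_nonneg_right hts (by linarith : (0:ℝ) ≤ -d e)
          rw [div_mul_cancel₀] at this
          · linarith [this]
          · linarith
        constructor
        · simp only [hy']; linarith
        · have : t * d e < 0 := mul_neg_of_pos_of_neg ht_pos hdn
          simp only [hy']; linarith
  -- the argmin edge becomes integral
  obtain ⟨e0, he0T, he0⟩ := Finset.exists_mem_eq_inf' hT slack
  have he0F : e0 ∈ Fr G y := (hmemT e0 he0T).1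
  have he0d : d e0 ≠ 0 := (hmemT e0 he0T).2
  have he0int : y' e0 = 0 ∨ y' e0 = 1 := by
    by_cases hdd : 0 < d e0
    · right
      have : t = (1 - y e0) / d e0 := by
        have h : t = slack e0 := he0
        simp only [hslack, if_pos hdd] at h; exact h
      simp only [hy', this]
      field_simp
      ring
    · left
      have hdn : d e0 < 0 := lt_of_le_of_ne (not_lt.1 hdd) he0d
      have : t = y e0 / (-d e0) := by
        have h : t = slack e0 := he0
        simp only [hslack, if_neg hdd] at h; exact h
      simp only [hy', this]
      rw [div_mul_eq_mul_div, mul_div_assoc, div_neg, div_self he0d]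
      ring
  -- Fr shrinks
  have hFr' : Fr G y' ⊆ Fr G y := by
    intro e he
    obtain ⟨heE, h0, h1⟩ := mem_Fr.1 he
    by_cases hd : d e = 0
    · exact mem_Fr.2 ⟨heE, by simpa [hy', hd] using h0, by simpa [hy', hd] using h1⟩
    · by_contra h; exact hd (hsupp e h)
  have he0' : e0 ∉ Fr G y' := by
    intro h
    obtain ⟨-, h0, h1⟩ := mem_Fr.1 h
    rcases he0int with h | h <;> rw [h] at h0 h1 <;> linarith
  have hcard : (Fr G y').card < (Fr G y).card :=
    Finset.card_lt_card (Finset.ssubset_iff_of_subset hFr' |>.2 ⟨e0, he0F, he0'⟩)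
  -- sums
  have hrow0 : ∀ v, ∑ e ∈ G.incidenceFinset v, d e
      = ∑ e ∈ G.incidenceFinset v ∩ Fr G y, d e := by
    intro v
    refine (Finset.sum_subset Finset.inter_subset_left ?_).symm
    intro e he hni
    exact hsupp e (fun hf => hni (Finset.mem_inter.2 ⟨he, hf⟩))
  have hYv' : ∀ v, Yv G y' v = Yv G y v + t * ∑ e ∈ G.incidenceFinset v, d e := by
    intro v
    simp only [Yv, hy', Finset.sum_add_distrib, Finset.mul_sum]
  have hsub : ∀ v, G.incidenceFinset v ∩ Fr G y' ⊆ G.incidenceFinset v ∩ Fr G y :=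
    fun v => Finset.inter_subset_inter (Finset.Subset.refl _) hFr'
  have hdmono : ∀ v, dF G y' v ≤ dF G y v := fun v => Finset.card_le_card (hsub v)
  refine ⟨y', ⟨h01, ?_, ?_, ?_⟩, hcard⟩
  · -- I2
    intro v hv
    have h2 : 2 ≤ dF G y v := le_trans hv (hdmono v)
    rw [hYv' v, hrow v h2, mul_zero, add_zero]
    exact hI.2.1 v h2
  · -- I3
    intro v hv
    by_cases h2 : 2 ≤ dF G y v
    · have hYeq : Yv G y' v = Yv G z v := by
        rw [hYv' v, hrow v h2, mul_zero, add_zero]; exact hI.2.1 v h2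
      obtain ⟨e1, he1⟩ := Finset.card_eq_one.1 (show (G.incidenceFinset v ∩ Fr G y').card = 1 by
        simpa [dF] using hv)
      have he1m : e1 ∈ G.incidenceFinset v ∩ Fr G y' := by
        rw [he1]; exact Finset.mem_singleton_self e1
      have he1F : e1 ∈ Fr G y' := (Finset.mem_inter.1 he1m).2
      obtain ⟨-, hp0, hp1⟩ := mem_Fr.1 he1F
      have hfs : fs G y' v = y' e1 := by rw [fs, he1, Finset.sum_singleton]
      rw [hYeq, hfs]
      have hr : Yv G z v - Yv G z v - y' e1 = -(y' e1) := by ring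
      rw [hr]
      exact Set.mem_Ioo.2 ⟨by linarith, by linarith⟩
    · have h1' : (G.incidenceFinset v ∩ Fr G y).card = 1 := by
        have := hdmono v
        simp only [dF] at this h2 hv ⊢
        omega
      obtain ⟨e1, he1⟩ := Finset.card_eq_one.1 h1'
      have heq : G.incidenceFinset v ∩ Fr G y' = G.incidenceFinset v ∩ Fr G y := by
        apply Finset.eq_of_subset_of_card_le (hsub v)
        rw [h1']
        have : (G.incidenceFinset v ∩ Fr G y').card = 1 := by simpa [dF] using hv
        omega
      have hrow1 : ∑ e ∈ G.incidenceFinset v, d e = d e1 := by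
        rw [hrow0 v, he1, Finset.sum_singleton]
      have hfs : fs G y' v = y e1 + t * d e1 := by
        rw [fs, heq, he1, Finset.sum_singleton]
      have hfsy : fs G y v = y e1 := by rw [fs, he1, Finset.sum_singleton]
      have hIoo := hI.2.2.1 v (by simpa [dF] using h1')
      rw [hYv' v, hrow1, hfs]
      have hring : Yv G y v + t * d e1 - Yv G z v - (y e1 + t * d e1)
          = Yv G y v - Yv G z v - fs G y v := by rw [hfsy]; ring
      rw [hring]; exact hIoo
  · -- I4
    intro v hv
    by_cases h2 : 2 ≤ dF G y v
    · rw [hYv' v, hrow v h2, mul_zero, add_zero, hI.2.1 v h2]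
      exact Set.mem_Ioc.2 ⟨by norm_num, by norm_num⟩
    · by_cases h1 : dF G y v = 1
      · obtain ⟨e1, he1⟩ := Finset.card_eq_one.1 (show (G.incidenceFinset v ∩ Fr G y).card = 1 by
          simpa [dF] using h1)
        have he1m : e1 ∈ G.incidenceFinset v ∩ Fr G y := by
          rw [he1]; exact Finset.mem_singleton_self e1
        have he1inc : e1 ∈ G.incidenceFinset v := (Finset.mem_inter.1 he1m).1
        have he1E : e1 ∈ G.edgeFinset := (mem_inc.1 he1inc).1
        have hrow1 : ∑ e ∈ G.incidenceFinset v, d e = d e1 := by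
          rw [hrow0 v, he1, Finset.sum_singleton]
        have hempty' : G.incidenceFinset v ∩ Fr G y' = ∅ := by
          apply Finset.card_eq_zero.1; simpa [dF] using hv
        have he1' : e1 ∉ Fr G y' := by
          intro hmem
          have : e1 ∈ G.incidenceFinset v ∩ Fr G y' := Finset.mem_inter.2 ⟨he1inc, hmem⟩
          rw [hempty'] at this
          exact absurd this (Finset.notMem_empty e1)
        have hy'e := h01 e1 he1E
        have hy'int : y' e1 ≤ 0 ∨ 1 ≤ y' e1 := by
          by_contra hcon
          push_neg at hcon
          exact he1' (mem_Fr.2 ⟨he1E, hcon.1, hcon.2⟩)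
        have hfsy : fs G y v = y e1 := by rw [fs, he1, Finset.sum_singleton]
        have hIoo := hI.2.2.1 v h1
        rw [hfsy] at hIoo
        rw [hYv' v, hrow1]
        have key : Yv G y v + t * d e1 - Yv G z v
            = (Yv G y v - Yv G z v - y e1) + y' e1 := by simp only [hy']; ring
        rw [key]
        obtain ⟨hl, hr⟩ := Set.mem_Ioo.1 hIoo
        exact Set.mem_Ioc.2 ⟨by linarith [hy'e.1], by linarith [hy'e.2]⟩
      · have h0 : dF G y v = 0 := by omega
        have hempty : G.incidenceFinset v ∩ Fr G y = ∅ := by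
          apply Finset.card_eq_zero.1; simpa [dF] using h0
        have hrowz : ∑ e ∈ G.incidenceFinset v, d e = 0 := by
          rw [hrow0 v, hempty, Finset.sum_empty]
        rw [hYv' v, hrowz, mul_zero, add_zero]
        exact hI.2.2.2 v h0

lemma regular_of_no_kernel {y : Sym2 V → ℝ}
    (hnd : ¬ ∃ d : Sym2 V → ℝ, (∀ e, e ∉ Fr G y → d e = 0) ∧ (∃ e, d e ≠ 0) ∧
      (∀ v, 2 ≤ dF G y v → ∑ e ∈ G.incidenceFinset v, d e = 0)) :
    ∀ v, dF G y v = 0 ∨ dF G y v = 2 := by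
  classical
  by_contra hcon
  push_neg at hcon
  obtain ⟨v0, hv00, hv02⟩ := hcon
  set F : Finset (Sym2 V) := Fr G y with hF
  set A : Finset V := univ.filter (fun v => 2 ≤ dF G y v) with hA
  -- each fractional edge has exactly two endpoints
  have hend : ∀ e ∈ F, (univ.filter (fun v => v ∈ e)).card = 2 := by
    intro e he
    have hnd' : ¬ e.IsDiag :=
      G.not_isDiag_of_mem_edgeSet (SimpleGraph.mem_edgeFinset.1 (mem_Fr.1 he).1)
    induction e with
    | _ a b =>
      have hab : a ≠ b := by simpa [Sym2.isDiag_iff_proj_eq] using hnd'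
      have : (univ.filter (fun v => v ∈ s(a, b))) = {a, b} := by
        ext v; simp [Sym2.mem_iff]
      rw [this, Finset.card_insert_of_notMem (by simp [hab]), Finset.card_singleton]
  -- dF as a filter over F
  have hdF : ∀ v, dF G y v = (F.filter (fun e => v ∈ e)).card := by
    intro v
    show (G.incidenceFinset v ∩ Fr G y).card = _
    congr 1
    ext e
    simp only [Finset.mem_inter, Finset.mem_filter, mem_inc]
    constructor
    · rintro ⟨⟨hE, hv⟩, hf⟩; exact ⟨hf, hv⟩
    · rintro ⟨hf, hv⟩; exact ⟨⟨(mem_Fr.1 hf).1, hv⟩, hf⟩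
  -- double counting
  have hswap : ∑ v ∈ A, dF G y v = ∑ e ∈ F, (A.filter (fun v => v ∈ e)).card := by
    simp only [hdF, Finset.card_filter]
    rw [Finset.sum_comm]
  have hub : ∀ e ∈ F, (A.filter (fun v => v ∈ e)).card ≤ 2 := by
    intro e he
    calc (A.filter (fun v => v ∈ e)).card
        ≤ (univ.filter (fun v => v ∈ e)).card :=
          Finset.card_le_card (Finset.filter_subset_filter _ (Finset.subset_univ A))
      _ = 2 := hend e he
  have hlb : 2 * A.card ≤ ∑ v ∈ A, dF G y v := by
    calc 2 * A.card = ∑ _v ∈ A, 2 := by rw [Finset.sum_const, smul_eq_mul]; ring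
    _ ≤ ∑ v ∈ A, dF G y v := by
        apply Finset.sum_le_sum
        intro v hv
        exact (Finset.mem_filter.1 hv).2
  -- strict count: A.card < F.card
  have hAF : A.card < F.card := by
    rcases Nat.lt_or_ge (dF G y v0) 2 with hlt | hge
    · -- dF v0 = 1
      have h1 : dF G y v0 = 1 := by omega
      have hv0A : v0 ∉ A := by simp [hA]; omega
      have hne : (G.incidenceFinset v0 ∩ F).card = 1 := by simpa [dF] using h1
      obtain ⟨e0, he0⟩ := Finset.card_eq_one.1 hne
      have he0m : e0 ∈ G.incidenceFinset v0 ∩ F := by rw [he0]; exact mem_singleton_self e0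
      have he0F : e0 ∈ F := (Finset.mem_inter.1 he0m).2
      have hv0e : v0 ∈ e0 := (mem_inc.1 (Finset.mem_inter.1 he0m).1).2
      obtain ⟨b, hb⟩ := Sym2.mem_iff_exists.1 hv0e
      have hsub1 : A.filter (fun v => v ∈ e0) ⊆ {b} := by
        intro v hv
        obtain ⟨hvA, hve⟩ := Finset.mem_filter.1 hv
        rw [hb] at hve
        rcases Sym2.mem_iff.1 hve with h | h
        · exact absurd (h ▸ hvA) hv0A
        · simp [h]
      have hcount : (A.filter (fun v => v ∈ e0)).card < 2 := by
        have := Finset.card_le_card hsub1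
        simp at this; omega
      have hstrict : ∑ e ∈ F, (A.filter (fun v => v ∈ e)).card < 2 * F.card := by
        rw [show 2 * F.card = ∑ _e ∈ F, 2 by rw [Finset.sum_const, smul_eq_mul]; ring]
        exact Finset.sum_lt_sum hub ⟨e0, he0F, hcount⟩
      omega
    · -- dF v0 ≥ 3
      have h3 : 3 ≤ dF G y v0 := by omega
      have hv0A : v0 ∈ A := by simp [hA]; omega
      have hstrict : 2 * A.card < ∑ v ∈ A, dF G y v := by
        rw [show 2 * A.card = ∑ _v ∈ A, 2 by rw [Finset.sum_const, smul_eq_mul]; ring]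
        exact Finset.sum_lt_sum (fun v hv => (Finset.mem_filter.1 hv).2) ⟨v0, hv0A, by omega⟩
      have hub2 : ∑ e ∈ F, (A.filter (fun v => v ∈ e)).card ≤ 2 * F.card := by
        rw [show 2 * F.card = ∑ _e ∈ F, 2 by rw [Finset.sum_const, smul_eq_mul]; ring]
        exact Finset.sum_le_sum hub
      omega
  -- linear algebra: a nonzero kernel vector exists, contradiction
  apply hnd
  have hM : ∃ w : (↥F → ℝ), w ≠ 0 ∧
      ∀ a : ↥A, ∑ e ∈ F.attach, (if (a : V) ∈ (e : Sym2 V) then w e else 0) = 0 := by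
    let M : (↥F → ℝ) →ₗ[ℝ] (↥A → ℝ) :=
      { toFun := fun w a => ∑ e ∈ F.attach, (if (a : V) ∈ (e : Sym2 V) then w e else 0)
        map_add' := by
          intro w1 w2
          funext a
          simp only [Pi.add_apply]
          rw [← Finset.sum_add_distrib]
          apply Finset.sum_congr rfl
          intro e _
          split <;> simp
        map_smul' := by
          intro c w
          funext a
          simp only [Pi.smul_apply, RingHom.id_apply, smul_eq_mul, Finset.mul_sum]
          apply Finset.sum_congr rfl
          intro e _
          split <;> simp }
    have hninj : ¬ Function.Injective M := by
      intro hinj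
      have := LinearMap.finrank_le_finrank_of_injective hinj
      rw [Module.finrank_pi, Module.finrank_pi, Fintype.card_coe, Fintype.card_coe] at this
      omega
    rw [Function.not_injective_iff] at hninj
    obtain ⟨w1, w2, heq, hne⟩ := hninj
    refine ⟨w1 - w2, sub_ne_zero.2 hne, ?_⟩
    intro a
    have : M (w1 - w2) a = 0 := by rw [map_sub, heq]; simp
    simpa [M, Finset.sum_sub_distrib, sub_eq_zero] using this
  obtain ⟨w, hw, hker⟩ := hM
  refine ⟨fun e => if h : e ∈ F then w ⟨e, h⟩ else 0, ?_, ?_, ?_⟩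
  · intro e he
    have heF : e ∉ F := by rwa [hF]
    show (if h : e ∈ F then w ⟨e, h⟩ else 0) = 0
    exact dif_neg heF
  · rw [Function.ne_iff] at hw
    obtain ⟨⟨e, he⟩, hwe⟩ := hw
    refine ⟨e, ?_⟩
    show (if h : e ∈ F then w ⟨e, h⟩ else 0) ≠ 0
    rw [dif_pos he]
    simpa using hwe
  · intro v hv
    have hvA : v ∈ A := by simp [hA]; omega
    show ∑ e ∈ G.incidenceFinset v, (if h : e ∈ F then w ⟨e, h⟩ else 0) = 0
    have hstep : ∑ e ∈ G.incidenceFinset v, (if h : e ∈ F then w ⟨e, h⟩ else 0)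
        = ∑ e ∈ G.incidenceFinset v ∩ F, (if h : e ∈ F then w ⟨e, h⟩ else 0) := by
      refine (Finset.sum_subset Finset.inter_subset_left ?_).symm
      intro e he hni
      rw [dif_neg]
      intro hf
      exact hni (Finset.mem_inter.2 ⟨he, hf⟩)
    rw [hstep]
    have hset : G.incidenceFinset v ∩ F = F.filter (fun e => v ∈ e) := by
      ext e
      simp only [Finset.mem_inter, Finset.mem_filter, mem_inc, hF]
      constructor
      · rintro ⟨⟨hE, hv'⟩, hf⟩; exact ⟨hf, hv'⟩
      · rintro ⟨hf, hv'⟩; exact ⟨⟨(mem_Fr.1 hf).1, hv'⟩, hf⟩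
    rw [hset, Finset.sum_filter]
    have := hker ⟨v, hvA⟩
    rw [← Finset.sum_attach F (fun e => if v ∈ e then (if h : e ∈ F then w ⟨e, h⟩ else 0) else 0)]
    rw [← this]
    apply Finset.sum_congr rfl
    intro e _
    congr 1
    rw [dif_pos e.2]

open SimpleGraph

/-- support list entries are getVert -/
lemma support_getElem {H : SimpleGraph V} {a b : V} (p : H.Walk a b) :
    ∀ (i : ℕ) (h : i < p.support.length), p.support[i] = p.getVert i := by
  induction p with
  | nil => intro i h; simp only [Walk.support_nil, List.length_singleton] at h
           interval_cases i <;> simp [Walk.getVert_zero]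
  | cons hadj q ih =>
      intro i h
      cases i with
      | zero => simp [Walk.support_cons, Walk.getVert_zero]
      | succ n =>
          simp only [Walk.support_cons, List.getElem_cons_succ, Walk.getVert_cons_succ]
          have hn : n < q.support.length := by
            simp only [Walk.support_cons, List.length_cons] at h
            omega
          exact ih n hn

/-- in a cycle, getVert is injective on [1, length] -/
lemma cycle_getVert_inj {H : SimpleGraph V} {u : V} {c : H.Walk u u} (hc : c.IsCycle)
    {i j : ℕ} (hi1 : 1 ≤ i) (hiL : i ≤ c.length) (hj1 : 1 ≤ j) (hjL : j ≤ c.length)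
    (h : c.getVert i = c.getVert j) : i = j := by
  have hnd : c.support.tail.Nodup := hc.2
  have hlen : c.support.length = c.length + 1 := c.length_support
  have htl : c.support.tail.length = c.length := by
    rw [List.length_tail, hlen]; omega
  have hi' : i - 1 < c.support.tail.length := by omega
  have hj' : j - 1 < c.support.tail.length := by omega
  have hgot : ∀ (k : ℕ) (hk : k < c.support.tail.length),
      c.support.tail[k] = c.getVert (k + 1) := by
    intro k hk
    have h1 : c.support.tail[k] = c.support[k + 1] := by
      rw [List.getElem_tail]
    rw [h1, support_getElem]
  have := (hnd.getElem_inj_iff (i := i-1) (j := j-1) (hi := hi') (hj := hj')).1 ?_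
  · omega
  · rw [hgot _ hi', hgot _ hj']
    have h1 : i - 1 + 1 = i := by omega
    have h2 : j - 1 + 1 = j := by omega
    rw [h1, h2]; exact h

/-- first-edge lemma for paths -/
lemma path_first_edge {H : SimpleGraph V} {a b : V} {p : H.Walk a b} (hp : p.IsPath)
    {e : Sym2 V} (he : e ∈ p.edges) (ha : a ∈ e) : e = s(a, p.getVert 1) := by
  cases p with
  | nil => simp at he
  | cons hadj q =>
      rw [Walk.edges_cons] at he
      rcases List.mem_cons.1 he with h | h
      · subst h
        rw [Walk.getVert_cons_succ, Walk.getVert_zero]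
      · exfalso
        obtain ⟨x, hx⟩ := Sym2.mem_iff_exists.1 ha
        rw [hx] at h
        have : a ∈ q.support := Walk.fst_mem_support_of_mem_edges q h
        rw [Walk.cons_isPath_iff] at hp
        exact hp.2 this

/-- existence of a cycle in a graph with an edge, where every vertex
    touching an edge has at least two distinct incident edges witnessed
    by a "second neighbor" function -/
lemma exists_cycle_aux {H : SimpleGraph V} [Fintype V]
    (hdeg : ∀ (a b : V), H.Adj a b → ∃ w, H.Adj a w ∧ w ≠ b) :
    ∀ (k : ℕ) (a b : V) (p : H.Walk a b), p.IsPath → 1 ≤ p.length →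
      Fintype.card V ≤ p.length + k →
      ∃ (w : V) (c : H.Walk w w), c.IsCycle := by
  intro k
  induction k with
  | zero =>
      intro a b p hp hlen hcard
      exfalso
      have h1 : p.support.length ≤ Fintype.card V := hp.support_nodup.length_le_card
      rw [p.length_support] at h1
      omega
  | succ k ih =>
      intro a b p hp hlen hcard
      have hadj1 : H.Adj a (p.getVert 1) := by
        have := p.adj_getVert_succ (i := 0) (by omega)
        simpa [Walk.getVert_zero] using this
      obtain ⟨w, haw, hwne⟩ := hdeg a (p.getVert 1) hadj1
      by_cases hws : w ∈ p.support
      · -- found a cycle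
        have hq : (p.takeUntil w hws).IsPath := hp.takeUntil hws
        have hwa : w ≠ a := fun h => H.irrefl (h ▸ haw)
        refine ⟨w, Walk.cons haw.symm (p.takeUntil w hws), ?_⟩
        apply SimpleGraph.Path.cons_isCycle ⟨p.takeUntil w hws, hq⟩ haw.symm
        intro hmem
        have hmem' : s(w, a) ∈ p.edges := Walk.edges_takeUntil_subset p hws hmem
        have : s(w, a) = s(a, p.getVert 1) :=
          path_first_edge hp hmem' (by simp)
        rw [Sym2.eq_iff] at this
        rcases this with ⟨h1, h2⟩ | ⟨h1, h2⟩
        · exact hwa h1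
        · exact hwne h1
      · -- extend the path
        have hp' : (Walk.cons haw.symm p).IsPath := by
          rw [Walk.cons_isPath_iff]
          exact ⟨hp, hws⟩
        exact ih w b (Walk.cons haw.symm p) hp' (by rw [Walk.length_cons]; omega)
          (by rw [Walk.length_cons]; omega)

lemma exists_cycle {H : SimpleGraph V} [Fintype V]
    (hdeg : ∀ (a b : V), H.Adj a b → ∃ w, H.Adj a w ∧ w ≠ b)
    {a b : V} (hab : H.Adj a b) :
    ∃ (w : V) (c : H.Walk w w), c.IsCycle := by
  have hp : (Walk.cons hab Walk.nil).IsPath := by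
    rw [Walk.cons_isPath_iff]
    refine ⟨Walk.IsPath.nil, ?_⟩
    simp only [Walk.support_nil, List.mem_singleton]
    exact hab.ne
  exact exists_cycle_aux hdeg (Fintype.card V) a b _ hp (by simp) (by simp)


lemma cycle_round {z y : Sym2 V → ℝ} (hI : Inv G z y)
    (hreg : ∀ v, dF G y v = 0 ∨ dF G y v = 2)
    (u : V) (L : ℕ) (a : ℕ → V) (hL3 : 3 ≤ L) (ha0 : a 0 = u) (haL : a L = u)
    (hEF : ∀ i, i < L → s(a i, a (i + 1)) ∈ Fr G y)
    (hinj : ∀ i j, 1 ≤ i → i ≤ L → 1 ≤ j → j ≤ L → a i = a j → i = j)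
    (pa : ℕ) (hcase : (pa = 1 ∧ fs G y u < 1) ∨ (pa = 0 ∧ 1 ≤ fs G y u)) :
    ∃ y', Inv G z y' ∧ (Fr G y').card < (Fr G y).card := by
  classical
  set Ee : ℕ → Sym2 V := fun i => s(a i, a (i + 1)) with hEe
  have hEF' : ∀ i, i < L → Ee i ∈ Fr G y := hEF
  have hEinj : ∀ i j, i < L → j < L → Ee i = Ee j → i = j := by
    intro i j hi hj hij
    simp only [hEe, Sym2.eq_iff] at hij
    rcases hij with ⟨h1, h2⟩ | ⟨h1, h2⟩
    · exact Nat.succ_injective (hinj _ _ (by omega) (by omega) (by omega) (by omega) h2)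
    · rcases Nat.eq_zero_or_pos i with hi0 | hip
      · rcases Nat.eq_zero_or_pos j with hj0 | hjp
        · omega
        · subst hi0
          have hjL' : j + 1 = L := by
            apply hinj _ _ (by omega) (by omega) (by omega) (by omega)
            rw [← h1, ha0, ← haL]
          have hj1' : (1 : ℕ) = j :=
            hinj _ _ (by omega) (by omega) (by omega) (by omega) h2
          omega
      · rcases Nat.eq_zero_or_pos j with hj0 | hjp
        · subst hj0
          have hiL' : i + 1 = L := by
            apply hinj _ _ (by omega) (by omega) (by omega) (by omega)
            rw [h2, ha0, ← haL]
          have hi1' : i = 1 :=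
            hinj _ _ (by omega) (by omega) (by omega) (by omega) h1
          omega
        · have e1 : i = j + 1 :=
            hinj _ _ (by omega) (by omega) (by omega) (by omega) h1
          have e2 : i + 1 = j :=
            hinj _ _ (by omega) (by omega) (by omega) (by omega) h2
          omega
  -- the 0/1 pattern
  set x : Sym2 V → ℕ :=
    fun e => if (∃ i, i < L ∧ (i + pa) % 2 = 0 ∧ e = Ee i) then 1 else 0 with hx
  have hx01 : ∀ e, x e = 0 ∨ x e = 1 := by
    intro e; simp only [hx]; split <;> simp
  have hxE : ∀ i, i < L → x (Ee i) = if (i + pa) % 2 = 0 then 1 else 0 := by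
    intro i hi
    by_cases hpar : (i + pa) % 2 = 0
    · have hex : (∃ i', i' < L ∧ (i' + pa) % 2 = 0 ∧ Ee i = Ee i') := ⟨i, hi, hpar, rfl⟩
      simp only [hx]
      rw [if_pos hex, if_pos hpar]
    · simp only [hx]
      rw [if_neg, if_neg hpar]
      rintro ⟨j, hj, hjpar, hje⟩
      exact hpar ((hEinj i j hi hj hje) ▸ hjpar)
  set cycE : Finset (Sym2 V) := (Finset.range L).image Ee with hcycE
  have hmem_cycE : ∀ {e}, e ∈ cycE ↔ ∃ i, i < L ∧ Ee i = e := by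
    intro e
    simp [hcycE]
  have hcycE_sub : cycE ⊆ Fr G y := by
    intro e he
    obtain ⟨i, hi, hie⟩ := hmem_cycE.1 he
    exact hie ▸ hEF' i hi
  set y' : Sym2 V → ℝ := fun e => if e ∈ cycE then (x e : ℝ) else y e with hy'
  have hy'cyc : ∀ e ∈ cycE, y' e = (x e : ℝ) := by
    intro e he; simp only [hy']; rw [if_pos he]
  have hy'not : ∀ e, e ∉ cycE → y' e = y e := by
    intro e he; simp only [hy']; rw [if_neg he]
  have hFr' : Fr G y' = Fr G y \ cycE := by
    ext e
    by_cases he : e ∈ cycE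
    · have h01 : y' e = 0 ∨ y' e = 1 := by
        rw [hy'cyc e he]
        rcases hx01 e with h | h <;> simp [h]
      simp only [mem_Fr, Finset.mem_sdiff]
      constructor
      · rintro ⟨-, h0, h1⟩
        rcases h01 with h | h <;> rw [h] at h0 h1 <;> linarith
      · rintro ⟨-, h⟩; exact absurd he h
    · rw [Finset.mem_sdiff]
      simp only [mem_Fr, hy'not e he]
      tauto
  have hcard : (Fr G y').card < (Fr G y).card := by
    apply Finset.card_lt_card
    rw [hFr']
    refine Finset.ssubset_iff_of_subset (Finset.sdiff_subset) |>.2 ⟨Ee 0, hEF' 0 (by omega), ?_⟩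
    simp only [Finset.mem_sdiff, not_and, not_not]
    intro _
    exact hmem_cycE.2 ⟨0, by omega, rfl⟩
  -- every on-cycle vertex has exactly the two cycle edges as fractional incident edges
  have hpair : ∀ (v : V) (i j : ℕ), i < L → j < L → i ≠ j → v ∈ Ee i → v ∈ Ee j →
      G.incidenceFinset v ∩ Fr G y = {Ee i, Ee j} := by
    intro v i j hi hj hij hvi hvj
    have hneE : Ee i ≠ Ee j := fun h => hij (hEinj i j hi hj h)
    have hsubp : ({Ee i, Ee j} : Finset (Sym2 V)) ⊆ G.incidenceFinset v ∩ Fr G y := by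
      intro e he
      rcases Finset.mem_insert.1 he with h | h
      · subst h
        exact Finset.mem_inter.2 ⟨mem_inc.2 ⟨(mem_Fr.1 (hEF' i hi)).1, hvi⟩, hEF' i hi⟩
      · rw [Finset.mem_singleton] at h; subst h
        exact Finset.mem_inter.2 ⟨mem_inc.2 ⟨(mem_Fr.1 (hEF' j hj)).1, hvj⟩, hEF' j hj⟩
    have hd2 : dF G y v = 2 := by
      rcases hreg v with h0 | h2
      · exfalso
        have hemp : (G.incidenceFinset v ∩ Fr G y) = ∅ :=
          Finset.card_eq_zero.1 (by simpa [dF] using h0)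
        have hstar := hsubp (Finset.mem_insert_self _ _)
        rw [hemp] at hstar
        exact Finset.notMem_empty _ hstar
      · exact h2
    have hcard2 : ({Ee i, Ee j} : Finset (Sym2 V)).card = 2 := by
      rw [Finset.card_insert_of_notMem (by simp [hneE]), Finset.card_singleton]
    refine (Finset.eq_of_subset_of_card_le hsubp ?_).symm
    rw [hcard2]
    have : (G.incidenceFinset v ∩ Fr G y).card = 2 := by simpa [dF] using hd2
    omega
  -- the master computation for on-cycle vertices
  have hmaster : ∀ (v : V) (i j : ℕ), i < L → j < L → i ≠ j → v ∈ Ee i → v ∈ Ee j →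
      dF G y' v = 0 ∧
        Yv G y' v - Yv G z v = ((x (Ee i) : ℝ) + (x (Ee j) : ℝ)) - fs G y v ∧
        0 < fs G y v ∧ fs G y v < 2 := by
    intro v i j hi hj hij hvi hvj
    have hTv := hpair v i j hi hj hij hvi hvj
    have hneE : Ee i ≠ Ee j := fun h => hij (hEinj i j hi hj h)
    have hfs : fs G y v = y (Ee i) + y (Ee j) := by
      rw [fs, hTv, Finset.sum_pair hneE]
    have hyi := mem_Fr.1 (hEF' i hi)
    have hyj := mem_Fr.1 (hEF' j hj)
    have hEiC : Ee i ∈ cycE := hmem_cycE.2 ⟨i, hi, rfl⟩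
    have hEjC : Ee j ∈ cycE := hmem_cycE.2 ⟨j, hj, rfl⟩
    have hpairsub : ({Ee i, Ee j} : Finset (Sym2 V)) ⊆ G.incidenceFinset v := by
      intro e he
      exact (Finset.mem_inter.1 (hTv ▸ he)).1
    have hd2 : dF G y v = 2 := by
      have : (G.incidenceFinset v ∩ Fr G y).card = 2 := by
        rw [hTv, Finset.card_insert_of_notMem (by simp [hneE]), Finset.card_singleton]
      simpa [dF] using this
    refine ⟨?_, ?_, ?_, ?_⟩
    · -- dF' = 0
      have hemp : G.incidenceFinset v ∩ Fr G y' = ∅ := by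
        rw [hFr']
        ext e
        simp only [Finset.mem_inter, Finset.mem_sdiff, Finset.notMem_empty, iff_false, not_and]
        intro hei hef
        simp only [not_not]
        have hp : e ∈ ({Ee i, Ee j} : Finset _) := hTv ▸ (Finset.mem_inter.2 ⟨hei, hef⟩)
        rcases Finset.mem_insert.1 hp with h | h
        · exact h ▸ hEiC
        · exact (Finset.mem_singleton.1 h) ▸ hEjC
      simp [dF, hemp]
    · -- the error formula
      have hsplit : ∀ e ∈ G.incidenceFinset v,
          y' e = y e + (if e ∈ ({Ee i, Ee j} : Finset (Sym2 V)) then (x e : ℝ) - y e else 0) := by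
        intro e he
        by_cases hep : e ∈ ({Ee i, Ee j} : Finset (Sym2 V))
        · rw [if_pos hep]
          have hec : e ∈ cycE := by
            rcases Finset.mem_insert.1 hep with h | h
            · exact h ▸ hEiC
            · exact (Finset.mem_singleton.1 h) ▸ hEjC
          rw [hy'cyc e hec]; ring
        · rw [if_neg hep, add_zero]
          apply hy'not
          intro hec
          have hf : e ∈ Fr G y := hcycE_sub hec
          exact hep (hTv ▸ Finset.mem_inter.2 ⟨he, hf⟩)
      have hYv' : Yv G y' v
          = Yv G y v + (((x (Ee i) : ℝ)) - y (Ee i) + ((x (Ee j) : ℝ) - y (Ee j))) := by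
        calc Yv G y' v = ∑ e ∈ G.incidenceFinset v,
              (y e + (if e ∈ ({Ee i, Ee j} : Finset (Sym2 V)) then (x e : ℝ) - y e else 0)) :=
            Finset.sum_congr rfl hsplit
          _ = Yv G y v + ∑ e ∈ G.incidenceFinset v,
              (if e ∈ ({Ee i, Ee j} : Finset (Sym2 V)) then (x e : ℝ) - y e else 0) := by
            rw [Finset.sum_add_distrib]; rfl
          _ = Yv G y v + ∑ e ∈ G.incidenceFinset v ∩ {Ee i, Ee j}, ((x e : ℝ) - y e) := by
            rw [Finset.sum_ite_mem]
          _ = Yv G y v + (((x (Ee i) : ℝ)) - y (Ee i) + ((x (Ee j) : ℝ) - y (Ee j))) := by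
            rw [Finset.inter_eq_right.2 hpairsub, Finset.sum_pair hneE]
      have hYeq : Yv G y v = Yv G z v := hI.2.1 v (by omega)
      rw [hYv', hYeq, hfs]; ring
    · rw [hfs]; have := hyi.2.1; have := hyj.2.1; linarith
    · rw [hfs]; have := hyi.2.2; have := hyj.2.2; linarith
  -- off-cycle vertices are untouched
  have hoff : ∀ v : V, (∀ n, n ≤ L → a n ≠ v) →
      dF G y' v = dF G y v ∧ Yv G y' v = Yv G y v ∧ fs G y' v = fs G y v := by
    intro v hv
    have hinc : ∀ e ∈ G.incidenceFinset v, e ∉ cycE := by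
      intro e he hec
      obtain ⟨i, hi, hie⟩ := hmem_cycE.1 hec
      have hvmem : v ∈ e := (mem_inc.1 he).2
      rw [← hie] at hvmem
      rcases Sym2.mem_iff.1 hvmem with h | h
      · exact hv i (by omega) h.symm
      · exact hv (i + 1) (by omega) h.symm
    have hyeq : ∀ e ∈ G.incidenceFinset v, y' e = y e := fun e he => hy'not e (hinc e he)
    have hseteq : G.incidenceFinset v ∩ Fr G y' = G.incidenceFinset v ∩ Fr G y := by
      rw [hFr']
      ext e
      simp only [Finset.mem_inter, Finset.mem_sdiff]
      constructor
      · rintro ⟨h1, h2, -⟩; exact ⟨h1, h2⟩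
      · rintro ⟨h1, h2⟩; exact ⟨h1, h2, hinc e h1⟩
    refine ⟨by simp [dF, hseteq], Finset.sum_congr rfl hyeq, ?_⟩
    rw [fs, fs, hseteq]
    exact Finset.sum_congr rfl (fun e he => hyeq e (Finset.mem_inter.1 he).1)
  -- on-cycle vertices: final error in (-1, 1]
  have hon : ∀ v : V, (∃ n, n ≤ L ∧ a n = v) →
      dF G y' v = 0 ∧ Yv G y' v - Yv G z v ∈ Set.Ioc (-1 : ℝ) 1 := by
    rintro v ⟨n, hnL, hna⟩
    by_cases hvu : v = u
    · subst hvu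
      have hvi : v ∈ Ee (L - 1) := by
        have hL1 : L - 1 + 1 = L := by omega
        simp only [hEe]
        rw [hL1, Sym2.mem_iff]
        right
        rw [haL]
      have hvj : v ∈ Ee 0 := by
        simp only [hEe]
        rw [Sym2.mem_iff]
        left
        rw [ha0]
      obtain ⟨hdF0, herr, hfs0, hfs2⟩ :=
        hmaster v (L - 1) 0 (by omega) (by omega) (by omega) hvi hvj
      refine ⟨hdF0, ?_⟩
      rw [Set.mem_Ioc, herr]
      have hm1 : x (Ee (L - 1)) = if ((L - 1) + pa) % 2 = 0 then 1 else 0 := hxE _ (by omega)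
      have hm0 : x (Ee 0) = if (0 + pa) % 2 = 0 then 1 else 0 := hxE _ (by omega)
      rcases hcase with ⟨hpa, hlt⟩ | ⟨hpa, hge⟩ <;> subst hpa
      · by_cases hLpar : L % 2 = 0
        · have hx1 : x (Ee (L - 1)) = 1 := by rw [hm1, if_pos (by omega)]
          have hx0 : x (Ee 0) = 0 := by rw [hm0, if_neg (by omega)]
          rw [hx1, hx0]
          push_cast
          constructor <;> linarith
        · have hx1 : x (Ee (L - 1)) = 0 := by rw [hm1, if_neg (by omega)]
          have hx0 : x (Ee 0) = 0 := by rw [hm0, if_neg (by omega)]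
          rw [hx1, hx0]
          push_cast
          constructor <;> linarith
      · by_cases hLpar : L % 2 = 0
        · have hx1 : x (Ee (L - 1)) = 0 := by rw [hm1, if_neg (by omega)]
          have hx0 : x (Ee 0) = 1 := by rw [hm0, if_pos (by omega)]
          rw [hx1, hx0]
          push_cast
          constructor <;> linarith
        · have hx1 : x (Ee (L - 1)) = 1 := by rw [hm1, if_pos (by omega)]
          have hx0 : x (Ee 0) = 1 := by rw [hm0, if_pos (by omega)]
          rw [hx1, hx0]
          push_cast
          constructor <;> linarith
    · have hn0 : n ≠ 0 := fun h => hvu (by rw [← hna, h, ha0])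
      have hnL' : n ≠ L := fun h => hvu (by rw [← hna, h, haL])
      have hvi : v ∈ Ee (n - 1) := by
        have hn1 : n - 1 + 1 = n := by omega
        simp only [hEe]
        rw [hn1, Sym2.mem_iff]
        right
        exact hna.symm
      have hvj : v ∈ Ee n := by
        simp only [hEe]
        rw [Sym2.mem_iff]
        left
        exact hna.symm
      obtain ⟨hdF0, herr, hfs0, hfs2⟩ :=
        hmaster v (n - 1) n (by omega) (by omega) (by omega) hvi hvj
      refine ⟨hdF0, ?_⟩
      rw [Set.mem_Ioc, herr]
      have hm1 : x (Ee (n - 1)) = if ((n - 1) + pa) % 2 = 0 then 1 else 0 := hxE _ (by omega)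
      have hm0 : x (Ee n) = if (n + pa) % 2 = 0 then 1 else 0 := hxE _ (by omega)
      have hsum : x (Ee (n - 1)) + x (Ee n) = 1 := by
        by_cases hpar : (n + pa) % 2 = 0
        · rw [hm1, hm0, if_pos hpar, if_neg (by omega)]
        · rw [hm1, hm0, if_neg hpar, if_pos (by omega)]
      have hc' : ((x (Ee (n - 1)) : ℝ)) + (x (Ee n) : ℝ) = 1 := by exact_mod_cast hsum
      rw [hc']
      constructor <;> linarith
  -- assemble the invariant
  refine ⟨y', ⟨?_, ?_, ?_, ?_⟩, hcard⟩
  · intro e he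
    by_cases hec : e ∈ cycE
    · rw [hy'cyc e hec]
      rcases hx01 e with h | h <;> rw [h] <;> norm_num
    · rw [hy'not e hec]
      exact hI.1 e he
  · intro v h2
    by_cases hvon : ∃ n, n ≤ L ∧ a n = v
    · have := (hon v hvon).1
      omega
    · push_neg at hvon
      obtain ⟨hd, hY, hf⟩ := hoff v hvon
      rw [hd] at h2
      rw [hY]
      exact hI.2.1 v h2
  · intro v h1
    by_cases hvon : ∃ n, n ≤ L ∧ a n = v
    · have := (hon v hvon).1
      omega
    · push_neg at hvon
      obtain ⟨hd, hY, hf⟩ := hoff v hvon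
      rw [hd] at h1
      rw [hY, hf]
      exact hI.2.2.1 v h1
  · intro v h0
    by_cases hvon : ∃ n, n ≤ L ∧ a n = v
    · exact (hon v hvon).2
    · push_neg at hvon
      obtain ⟨hd, hY, hf⟩ := hoff v hvon
      rw [hd] at h0
      rw [hY]
      exact hI.2.2.2 v h0

open SimpleGraph in
lemma cycle_step {z y : Sym2 V → ℝ} (hI : Inv G z y)
    (hreg : ∀ v, dF G y v = 0 ∨ dF G y v = 2) (hne : (Fr G y).Nonempty) :
    ∃ y', Inv G z y' ∧ (Fr G y').card < (Fr G y).card := by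
  classical
  have hadj_iff : ∀ a b : V,
      (fromEdgeSet (↑(Fr G y) : Set (Sym2 V))).Adj a b ↔ (s(a, b) ∈ Fr G y ∧ a ≠ b) := by
    intro a b; rw [SimpleGraph.fromEdgeSet_adj]; simp
  have hdeg : ∀ a b : V, (fromEdgeSet (↑(Fr G y) : Set (Sym2 V))).Adj a b →
      ∃ w, (fromEdgeSet (↑(Fr G y) : Set (Sym2 V))).Adj a w ∧ w ≠ b := by
    intro a b hab
    rw [hadj_iff] at hab
    obtain ⟨hfab, hne'⟩ := hab
    have hfinc : s(a, b) ∈ G.incidenceFinset a ∩ Fr G y :=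
      Finset.mem_inter.2 ⟨mem_inc.2 ⟨(mem_Fr.1 hfab).1, by simp⟩, hfab⟩
    have hd2 : dF G y a = 2 := by
      rcases hreg a with h0 | h2
      · exfalso
        have hemp : (G.incidenceFinset a ∩ Fr G y) = ∅ :=
          Finset.card_eq_zero.1 (by simpa [dF] using h0)
        rw [hemp] at hfinc
        exact Finset.notMem_empty _ hfinc
      · exact h2
    have hlt : 1 < (G.incidenceFinset a ∩ Fr G y).card := by
      have : (G.incidenceFinset a ∩ Fr G y).card = 2 := by simpa [dF] using hd2
      omega
    obtain ⟨f', hf'mem, hf'ne⟩ := Finset.exists_mem_ne hlt s(a, b)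
    have hf'F : f' ∈ Fr G y := (Finset.mem_inter.1 hf'mem).2
    have haf' : a ∈ f' := (mem_inc.1 (Finset.mem_inter.1 hf'mem).1).2
    obtain ⟨w, hw⟩ := Sym2.mem_iff_exists.1 haf'
    have hwa : a ≠ w := by
      intro h
      have hdiag : f'.IsDiag := by rw [hw, ← h]; exact Sym2.mk_isDiag_iff.2 rfl
      exact G.not_isDiag_of_mem_edgeSet
        (SimpleGraph.mem_edgeFinset.1 (mem_Fr.1 hf'F).1) hdiag
    refine ⟨w, ?_, ?_⟩
    · rw [hadj_iff]; exact ⟨hw ▸ hf'F, hwa⟩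
    · intro hwb
      apply hf'ne
      rw [hw, hwb]
  obtain ⟨e0, he0⟩ := hne
  have hnd : ¬ e0.IsDiag :=
    G.not_isDiag_of_mem_edgeSet (SimpleGraph.mem_edgeFinset.1 (mem_Fr.1 he0).1)
  have hstart : ∃ aa bb : V, (fromEdgeSet (↑(Fr G y) : Set (Sym2 V))).Adj aa bb := by
    induction e0 using Sym2.ind with
    | _ aa bb =>
      refine ⟨aa, bb, ?_⟩
      rw [hadj_iff]
      refine ⟨he0, ?_⟩
      intro h
      exact hnd (by rw [h]; exact Sym2.mk_isDiag_iff.2 rfl)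
  obtain ⟨aa, bb, hab⟩ := hstart
  obtain ⟨u0, c0, hc0⟩ := exists_cycle hdeg hab
  have hconv : ∀ (u : V) (c : (fromEdgeSet (↑(Fr G y) : Set (Sym2 V))).Walk u u), c.IsCycle →
      ((3 ≤ c.length) ∧ (c.getVert 0 = u) ∧ (c.getVert c.length = u) ∧
       (∀ i, i < c.length → s(c.getVert i, c.getVert (i + 1)) ∈ Fr G y) ∧
       (∀ i j, 1 ≤ i → i ≤ c.length → 1 ≤ j → j ≤ c.length →
          c.getVert i = c.getVert j → i = j)) := by
    intro u c hc
    refine ⟨hc.three_le_length, c.getVert_zero, c.getVert_length, ?_, ?_⟩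
    · intro i hi
      have hadj := c.adj_getVert_succ hi
      rw [SimpleGraph.fromEdgeSet_adj] at hadj
      exact Finset.mem_coe.1 hadj.1
    · intro i j h1 h2 h3 h4 h5
      exact cycle_getVert_inj hc h1 h2 h3 h4 h5
  by_cases hvs : ∃ w ∈ c0.support, fs G y w < 1
  · obtain ⟨w, hwmem, hfsw⟩ := hvs
    obtain ⟨h3, h0, hL, hE, hinj⟩ := hconv w (c0.rotate w hwmem) (hc0.rotate hwmem)
    exact cycle_round hI hreg w _ _ h3 h0 hL hE hinj 1 (Or.inl ⟨rfl, hfsw⟩)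
  · push_neg at hvs
    obtain ⟨h3, h0, hL, hE, hinj⟩ := hconv u0 c0 hc0
    exact cycle_round hI hreg u0 _ _ h3 h0 hL hE hinj 0
      (Or.inr ⟨rfl, hvs u0 c0.start_mem_support⟩)

lemma main {z : Sym2 V → ℝ} :
    ∀ (n : ℕ) (y : Sym2 V → ℝ), (Fr G y).card ≤ n → Inv G z y → Concl z G := by
  intro n
  induction n with
  | zero =>
      intro y hcard hI
      exact base hI (Finset.card_eq_zero.1 (by omega))
  | succ n ih =>
      intro y hcard hI
      by_cases hemp : Fr G y = ∅
      · exact base hI hemp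
      · by_cases hd : ∃ d : Sym2 V → ℝ, (∀ e, e ∉ Fr G y → d e = 0) ∧ (∃ e, d e ≠ 0) ∧
            (∀ v, 2 ≤ dF G y v → ∑ e ∈ G.incidenceFinset v, d e = 0)
        · obtain ⟨d, h1, h2, h3⟩ := hd
          obtain ⟨y', hI', hlt⟩ := kernel_step hI d h1 h2 h3
          exact ih y' (by omega) hI'
        · have hreg := regular_of_no_kernel hd
          obtain ⟨y', hI', hlt⟩ :=
            cycle_step hI hreg (Finset.nonempty_iff_ne_empty.2 hemp)
          exact ih y' (by omega) hI'

end AlonWei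

/-- Lemma of Alon and Wei: given a weight function `z : E → [0,1]` on the edges of a
finite simple graph, there is a `{0,1}`-valued function `x` on the edges such that at
every vertex the sum of `x` over incident edges differs from the sum of `z` over
incident edges by at most (strictly less than, from below) `1`. -/
theorem alon_wei_rounding
    {V : Type*} [Fintype V] [DecidableEq V] (G : SimpleGraph V) [DecidableRel G.Adj]
    (z : Sym2 V → ℝ) (hz : ∀ e ∈ G.edgeSet, z e ∈ Set.Icc (0 : ℝ) 1) :
    ∃ x : Sym2 V → ℕ, (∀ e, x e = 0 ∨ x e = 1) ∧
      ∀ v : V,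
        (∑ e ∈ G.incidenceFinset v, z e) - 1 < ∑ e ∈ G.incidenceFinset v, (x e : ℝ) ∧
        ∑ e ∈ G.incidenceFinset v, (x e : ℝ) ≤ (∑ e ∈ G.incidenceFinset v, z e) + 1 := by
  classical
  have hI : AlonWei.Inv G z z := by
    refine ⟨?_, ?_, ?_, ?_⟩
    · intro e he
      have := hz e (SimpleGraph.mem_edgeFinset.1 he)
      exact ⟨this.1, this.2⟩
    · intro v _; rfl
    · intro v h1
      obtain ⟨e1, he1⟩ := Finset.card_eq_one.1
        (show (G.incidenceFinset v ∩ AlonWei.Fr G z).card = 1 by simpa [AlonWei.dF] using h1)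
      have he1m : e1 ∈ G.incidenceFinset v ∩ AlonWei.Fr G z := by
        rw [he1]; exact Finset.mem_singleton_self e1
      have he1F : e1 ∈ AlonWei.Fr G z := (Finset.mem_inter.1 he1m).2
      obtain ⟨-, h0, hlt1⟩ := AlonWei.mem_Fr.1 he1F
      have hfs : AlonWei.fs G z v = z e1 := by rw [AlonWei.fs, he1, Finset.sum_singleton]
      rw [hfs]
      have : AlonWei.Yv G z v - AlonWei.Yv G z v - z e1 = -(z e1) := by ring
      rw [this]
      exact Set.mem_Ioo.2 ⟨by linarith, by linarith⟩
    · intro v _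
      have : AlonWei.Yv G z v - AlonWei.Yv G z v = 0 := by ring
      rw [this]
      exact Set.mem_Ioc.2 ⟨by norm_num, by norm_num⟩
  obtain ⟨x, hx01, hbd⟩ := AlonWei.main (AlonWei.Fr G z).card z le_rfl hI
  refine ⟨x, hx01, ?_⟩
  intro v
  obtain ⟨hl, hr⟩ := Set.mem_Ioc.1 (hbd v)
  simp only [AlonWei.Yv] at hl hr
  constructor <;> linarith
end

section
/- Every finite simple graph G = (V,E) has a spanning subgraph H such that for every vertex v ∈ V: d_G(v)/2 − 1 < d_H(v) ≤ d_G(v)/2 + 1, where d_G(v) and d_H(v) denote the degrees of v in G and in H respectively. -/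
/-- The degree of a vertex `v` with respect to a set `E'` of edges:
the number of edges of `E'` incident with `v`. -/
noncomputable def edgeDeg {V : Type*} (E' : Set (Sym2 V)) (v : V) : ℕ :=
  {e ∈ E' | v ∈ e}.ncard

/-!
Remove a longest trail `P` from `G`; by maximality every edge at an end of `P` lies on `P`.
By induction the remaining graph has an edge set `F` with `2 d_F(v) - d(v) ∈ {-1, 0, 1, 2}`;
add to it every other edge of `P`, starting with the first. Each passage of `P` through a vertex
brings one chosen and one unchosen edge, so only the ends of `P` can upset the balance, and there
all edges lie on `P`: the first edge is chosen and the last one may or may not be, which keeps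
`2 d_H(v) - d_G(v)` in `{-1, 0, 1, 2}`.
-/

section edgeDeg

variable {V : Type*}

theorem edgeDeg_union {A B : Set (Sym2 V)} (hA : A.Finite) (hB : B.Finite) (hAB : Disjoint A B)
    (v : V) : edgeDeg (A ∪ B) v = edgeDeg A v + edgeDeg B v := by
  have : {e ∈ A ∪ B | v ∈ e} = {e ∈ A | v ∈ e} ∪ {e ∈ B | v ∈ e} := Set.sep_union
  rw [edgeDeg, this]
  exact Set.ncard_union_eq (hAB.mono (Set.sep_subset _ _) (Set.sep_subset _ _))
    (hA.sep _) (hB.sep _)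

theorem edgeDeg_mono {A B : Set (Sym2 V)} (hB : B.Finite) (hAB : A ⊆ B) (v : V) :
    edgeDeg A v ≤ edgeDeg B v :=
  Set.ncard_le_ncard (fun _ he ↦ ⟨hAB he.1, he.2⟩) (hB.sep _)

theorem edgeDeg_setOf_mem [DecidableEq V] {l : List (Sym2 V)} (hl : l.Nodup) (v : V) :
    edgeDeg {e | e ∈ l} v = l.countP (v ∈ ·) := by
  have : {e ∈ {e | e ∈ l} | v ∈ e} = ↑(l.filter (v ∈ ·)).toFinset := by ext; simp
  rw [edgeDeg, this, Set.ncard_coe_finset, List.toFinset_card_of_nodup (hl.filter _),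
    List.countP_eq_length_filter]

namespace SimpleGraph

variable (G : SimpleGraph V)

theorem edgeDeg_edgeSet (v : V) [Fintype (G.neighborSet v)] :
    edgeDeg G.edgeSet v = G.degree v := by
  classical
  rw [← G.card_incidenceSet_eq_degree, ← Nat.card_eq_fintype_card, Nat.card_coe_set_eq]
  rfl

theorem edgeDeg_edgeSet_sdiff_eq_zero {T : Set (Sym2 V)} {v : V}
    (hv : G.incidenceSet v ⊆ T) : edgeDeg (G.edgeSet \ T) v = 0 := by
  have : {e ∈ G.edgeSet \ T | v ∈ e} = ∅ :=
    Set.eq_empty_of_forall_notMem fun _ ⟨⟨heG, heT⟩, hve⟩ ↦ heT (hv ⟨heG, hve⟩)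
  rw [edgeDeg, this, Set.ncard_empty]

end SimpleGraph

end edgeDeg

theorem Sym2.ite_mem_mk_of_ne {α : Type*} [DecidableEq α] {a b : α} (x : α) (hab : a ≠ b) :
    (if x ∈ s(a, b) then 1 else 0 : ℤ) = (if x = a then 1 else 0) + (if x = b then 1 else 0) := by
  by_cases ha : x = a <;> by_cases hb : x = b <;> simp_all

namespace SimpleGraph.Walk

variable {V : Type*} {G : SimpleGraph V}

def evenEdges : ∀ {u v : V}, G.Walk u v → List (Sym2 V)
  | _, _, nil => []
  | u, _, cons (v := w) _ nil => [s(u, w)]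
  | u, _, cons (v := w) _ (cons _ p) => s(u, w) :: p.evenEdges

theorem evenEdges_sublist : ∀ {u v : V} (p : G.Walk u v), p.evenEdges.Sublist p.edges
  | _, _, nil => .slnil
  | _, _, cons _ nil => .refl _
  | _, _, cons _ (cons _ p) => ((evenEdges_sublist p).cons _).cons_cons _

theorem two_mul_countP_evenEdges [DecidableEq V] : ∀ {u v : V} (p : G.Walk u v) (x : V),
    2 * (p.evenEdges.countP (x ∈ ·) : ℤ) = p.edges.countP (x ∈ ·) + (if x = u then 1 else 0)
      - (-1) ^ p.length * (if x = v then 1 else 0)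
  | _, _, nil, x => by simp [evenEdges]
  | u, _, cons (v := w) h nil, x => by
    simp only [evenEdges, edges_cons, edges_nil, length_cons, length_nil, List.countP_cons,
      List.countP_nil]
    push_cast
    simp only [decide_eq_true_eq, Sym2.ite_mem_mk_of_ne x h.ne]
    ring
  | u, _, cons (v := w) h (cons (v := y) h' p), x => by
    simp only [evenEdges, edges_cons, length_cons, List.countP_cons, pow_succ]
    push_cast
    simp only [decide_eq_true_eq, Sym2.ite_mem_mk_of_ne x h.ne, Sym2.ite_mem_mk_of_ne x h'.ne]
    linear_combination two_mul_countP_evenEdges p x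

theorem IsTrail.incidenceSet_subset_of_forall_length_le {u v : V} {p : G.Walk u v}
    (hp : p.IsTrail) (hmax : ∀ (u' v' : V) (q : G.Walk u' v'), q.IsTrail → q.length ≤ p.length) :
    G.incidenceSet u ⊆ {e | e ∈ p.edges} := by
  rintro e ⟨he, hu⟩
  obtain ⟨w, rfl⟩ := Sym2.mem_iff_exists.mp hu
  by_contra hne
  have hq : (cons (G.adj_symm he) p).IsTrail := by
    rw [isTrail_cons, Sym2.eq_swap]
    exact ⟨hp, hne⟩
  simpa using hmax w v _ hq

end SimpleGraph.Walk

namespace SimpleGraph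

variable {V : Type*}

theorem exists_isTrail_incidenceSet_subset_edges {G : SimpleGraph V} [Finite G.edgeSet]
    {e : Sym2 V} (he : e ∈ G.edgeSet) : ∃ (u v : V) (p : G.Walk u v), p.IsTrail ∧ p.edges ≠ [] ∧
      G.incidenceSet u ⊆ {e | e ∈ p.edges} ∧ G.incidenceSet v ⊆ {e | e ∈ p.edges} := by
  induction e using Sym2.ind with | _ a b =>
  have : Nonempty V := ⟨a⟩
  obtain ⟨u, v, p, hp, hmax⟩ := Walk.exists_isTrail_forall_isTrail_length_le_length G
  have hmax' : ∀ (u' v' : V) (q : G.Walk u' v'), q.IsTrail → q.length ≤ p.reverse.length := by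
    simpa using hmax
  refine ⟨u, v, p, hp, ?_, hp.incidenceSet_subset_of_forall_length_le hmax, ?_⟩
  · have : 1 ≤ p.length := by simpa using hmax a b (.cons (G.mem_edgeSet.mp he) .nil) (by simp)
    rwa [← List.length_pos_iff, Walk.length_edges]
  · simpa using hp.reverse.incidenceSet_subset_of_forall_length_le hmax'

theorem exists_subset_edgeSet_half_edgeDeg [Finite V] (G : SimpleGraph V) :
    ∃ F ⊆ G.edgeSet, ∀ v, edgeDeg G.edgeSet v ≤ 2 * edgeDeg F v + 1 ∧
      2 * edgeDeg F v ≤ edgeDeg G.edgeSet v + 2 := by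
  classical
  induction G using WellFoundedLT.induction with | _ G ih =>
  rcases G.edgeSet.eq_empty_or_nonempty with hG | ⟨e, he⟩
  · exact ⟨∅, Set.empty_subset _, fun v ↦ by simp [edgeDeg, hG]⟩
  obtain ⟨u, v, p, hp, hne, hu, hv⟩ := exists_isTrail_incidenceSet_subset_edges he
  set T : Set (Sym2 V) := {e | e ∈ p.edges}
  set S : Set (Sym2 V) := {e | e ∈ p.evenEdges}
  have hTG : T ⊆ G.edgeSet := fun _ h ↦ p.edges_subset_edgeSet h
  have hST : S ⊆ T := fun _ h ↦ p.evenEdges_sublist.subset h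
  have hlt : G.deleteEdges T < G := by
    rw [← edgeSet_ssubset_edgeSet, edgeSet_deleteEdges]
    exact hTG.sdiff_ssubset_of_nonempty (List.exists_mem_of_ne_nil _ hne)
  obtain ⟨F, hFG, hF⟩ := ih _ hlt
  rw [edgeSet_deleteEdges] at hFG hF
  refine ⟨F ∪ S, Set.union_subset (hFG.trans Set.sdiff_subset) (hST.trans hTG), fun x ↦ ?_⟩
  have hGx : edgeDeg G.edgeSet x = edgeDeg (G.edgeSet \ T) x + p.edges.countP (x ∈ ·) := by
    rw [← edgeDeg_setOf_mem hp.edges_nodup, ← edgeDeg_union (Set.toFinite _) (Set.toFinite _)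
      Set.disjoint_sdiff_left, Set.sdiff_union_of_subset hTG]
  have hFx : edgeDeg (F ∪ S) x = edgeDeg F x + p.evenEdges.countP (x ∈ ·) := by
    rw [← edgeDeg_setOf_mem (hp.edges_nodup.sublist p.evenEdges_sublist),
      edgeDeg_union (Set.toFinite _) (Set.toFinite _)
        ((Set.disjoint_sdiff_left.mono_right hST).mono_left hFG)]
  have htrail := p.two_mul_countP_evenEdges x
  rw [hGx, hFx]
  by_cases hx : x = u ∨ x = v
  · have hx0 : edgeDeg (G.edgeSet \ T) x = 0 := by
      rcases hx with rfl | rfl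
      exacts [G.edgeDeg_edgeSet_sdiff_eq_zero hu, G.edgeDeg_edgeSet_sdiff_eq_zero hv]
    have hF0 : edgeDeg F x = 0 := by
      simpa [hx0] using edgeDeg_mono (Set.toFinite _) hFG x
    rcases neg_one_pow_eq_or ℤ p.length with h | h <;> rw [h] at htrail <;>
      split_ifs at htrail <;> omega
  · rw [not_or] at hx
    rw [if_neg hx.1, if_neg hx.2] at htrail
    have := hF x
    omega

end SimpleGraph

/-- Every finite simple graph `G` has a spanning subgraph `H` with
`d_G(v)/2 − 1 < d_H(v) ≤ d_G(v)/2 + 1` for every vertex `v`. -/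
theorem half_degree_spanning_subgraph
    {V : Type*} [Fintype V] (G : SimpleGraph V) [DecidableRel G.Adj] :
    ∃ E' ⊆ G.edgeSet, ∀ v : V,
      (G.degree v : ℝ) / 2 - 1 < (edgeDeg E' v : ℝ) ∧
      (edgeDeg E' v : ℝ) ≤ (G.degree v : ℝ) / 2 + 1 := by
  obtain ⟨F, hFG, hF⟩ := G.exists_subset_edgeSet_half_edgeDeg
  refine ⟨F, hFG, fun v ↦ ?_⟩
  obtain ⟨hlow, hhigh⟩ := hF v
  rw [G.edgeDeg_edgeSet] at hlow hhigh
  have hlow' : (G.degree v : ℝ) ≤ 2 * edgeDeg F v + 1 := by exact_mod_cast hlow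
  have hhigh' : 2 * (edgeDeg F v : ℝ) ≤ G.degree v + 2 := by exact_mod_cast hhigh
  constructor <;> linarith
end

section
/- (Lovász Local Lemma, symmetric lopsided version) Let A = {A_1, A_2, …, A_n} be a family of events in a probability space. Suppose that for every i ∈ {1,…,n} there is a set Γ(A_i) ⊆ A of size at most D such that for each subfamily B ⊆ A \ (Γ(A_i) ∪ {A_i}) with P(∩_{B∈B} B̄) > 0 one has P(A_i | ∩_{B∈B} B̄) ≤ 1/(e(D+1)). Then P(∩_{i=1}^n Ā_i) > 0. -/
/-!
It suffices to prove the asymmetric lopsided lemma with weights `x_i < 1` and take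
`x_i = 1 / (D + 2)`. By strong induction on a finite set `S` of indices, `P(A_i ∩ ⋂_{j ∈ S} Āⱼ) ≤ x_i P(⋂_{j ∈ S} Āⱼ)`
for every `i ∉ S`. Split `S` into its indices `near` in `Γ i` and the others `far`: the hypothesis
bounds `P(A_i ∩ ⋂_far Āⱼ)` by `x_i ∏_{Γ i} (1 - x_j) P(⋂_far Āⱼ)`, and adding back the events of
`near` one at a time costs a factor of at most `1 - x_k` each, by the induction hypothesis. The
same peeling gives `P(⋂_S Āⱼ) ≥ ∏_S (1 - x_j) > 0`. The symmetric constant fits because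
`(1 + 1/(D+1))^(D+1) ≤ e`.
-/

open MeasureTheory ProbabilityTheory Finset
open scoped ENNReal

namespace LovaszLocalLemma

variable {Ω ι : Type*} {A : ι → Set Ω}

def noneOf (A : ι → Set Ω) (S : Finset ι) : Set Ω := ⋂ j ∈ S, (A j)ᶜ

@[simp]
lemma noneOf_empty : noneOf A ∅ = Set.univ := by
  simp [noneOf]

lemma noneOf_insert [DecidableEq ι] (k : ι) (T : Finset ι) :
    noneOf A (insert k T) = noneOf A T \ A k := by
  rw [noneOf, set_biInter_insert, Set.inter_comm, Set.sdiff_eq, noneOf]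

lemma noneOf_anti {S T : Finset ι} (h : S ⊆ T) : noneOf A T ⊆ noneOf A S :=
  Set.biInter_subset_biInter_left (by exact_mod_cast h)

variable [MeasurableSpace Ω] {μ : Measure Ω}

lemma measurableSet_noneOf (hA : ∀ i, MeasurableSet (A i)) (S : Finset ι) :
    MeasurableSet (noneOf A S) :=
  S.measurableSet_biInter fun j _ ↦ (hA j).compl

lemma one_sub_mul_le_measure_sdiff {s t : Set Ω} (hs : μ s ≠ ∞) {x : ℝ≥0∞}
    (h : μ (s ∩ t) ≤ x * μ s) : (1 - x) * μ s ≤ μ (s \ t) :=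
  calc (1 - x) * μ s = μ s - x * μ s := by
        rw [ENNReal.sub_mul fun _ _ ↦ hs, one_mul]
    _ ≤ μ s - μ (s ∩ t) := tsub_le_tsub_left h _
    _ ≤ μ (s \ (s ∩ t)) := le_measure_sdiff
    _ = μ (s \ t) := by rw [Set.sdiff_self_inter]

variable [DecidableEq ι] [IsFiniteMeasure μ] {x : ι → ℝ≥0∞}

lemma prod_one_sub_mul_le_measure_noneOf {S : Finset ι}
    (hS : ∀ T ⊂ S, ∀ k ∉ T, μ (noneOf A T ∩ A k) ≤ x k * μ (noneOf A T))
    {U V : Finset ι} (hUV : Disjoint U V) (hUVS : U ∪ V ⊆ S) :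
    (∏ k ∈ U, (1 - x k)) * μ (noneOf A V) ≤ μ (noneOf A (U ∪ V)) := by
  induction U using Finset.induction_on with
  | empty => simp
  | @insert a U ha ih =>
    rw [disjoint_insert_left] at hUV
    rw [insert_union] at hUVS
    have haUV : a ∉ U ∪ V := by simp [ha, hUV.1]
    have hUV_ssub : U ∪ V ⊂ S := (ssubset_insert haUV).trans_subset hUVS
    rw [prod_insert ha, mul_assoc, insert_union, noneOf_insert]
    calc (1 - x a) * ((∏ k ∈ U, (1 - x k)) * μ (noneOf A V))
        ≤ (1 - x a) * μ (noneOf A (U ∪ V)) := by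
          gcongr
          exact ih hUV.2 hUV_ssub.subset
      _ ≤ μ (noneOf A (U ∪ V) \ A a) :=
          one_sub_mul_le_measure_sdiff (measure_ne_top _ _) (hS _ hUV_ssub a haUV)

lemma measure_noneOf_ne_zero [NeZero μ] (hx : ∀ i, x i < 1) {S : Finset ι}
    (hS : ∀ T ⊂ S, ∀ k ∉ T, μ (noneOf A T ∩ A k) ≤ x k * μ (noneOf A T))
    {U : Finset ι} (hUS : U ⊆ S) : μ (noneOf A U) ≠ 0 := by
  have hprod : (∏ k ∈ U, (1 - x k)) * μ (noneOf A ∅) ≠ 0 := by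
    simpa [prod_ne_zero_iff, tsub_eq_zero_iff_le, hx] using NeZero.ne μ
  simpa using ne_bot_of_le_ne_bot hprod
    (prod_one_sub_mul_le_measure_noneOf hS (disjoint_empty_right U) (by simpa using hUS))

lemma measure_noneOf_inter_le [NeZero μ] (hA : ∀ i, MeasurableSet (A i)) (hx : ∀ i, x i < 1)
    (Γ : ι → Finset ι)
    (hcond : ∀ i B, (∀ j ∈ B, j ∉ Γ i ∧ j ≠ i) → μ (noneOf A B) ≠ 0 →
      μ[A i | noneOf A B] ≤ x i * ∏ j ∈ Γ i, (1 - x j))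
    (S : Finset ι) : ∀ i ∉ S, μ (noneOf A S ∩ A i) ≤ x i * μ (noneOf A S) := by
  induction S using Finset.strongInduction with
  | H S ih =>
  intro i hi
  set far := S.filter (· ∉ Γ i)
  set near := S.filter (· ∈ Γ i)
  have hfar : ∀ j ∈ far, j ∉ Γ i ∧ j ≠ i := fun j hj ↦
    ⟨(mem_filter.1 hj).2, fun hji ↦ hi (hji ▸ (mem_filter.1 hj).1)⟩
  have hpeel : (∏ k ∈ near, (1 - x k)) * μ (noneOf A far) ≤ μ (noneOf A S) := by
    simpa [near, far, filter_union_filter_not_eq] using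
      prod_one_sub_mul_le_measure_noneOf ih (disjoint_filter_filter_not S S _)
        (union_subset (filter_subset _ _) (filter_subset _ _))
  have hΓ : ∏ j ∈ Γ i, (1 - x j) ≤ ∏ k ∈ near, (1 - x k) :=
    prod_le_prod_of_subset_of_le_one' (fun j hj ↦ (mem_filter.1 hj).2) fun _ _ _ ↦ tsub_le_self
  calc μ (noneOf A S ∩ A i) ≤ μ (noneOf A far ∩ A i) :=
        measure_mono (Set.inter_subset_inter_left _ (noneOf_anti (filter_subset _ _)))
    _ = μ[A i | noneOf A far] * μ (noneOf A far) :=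
        (cond_mul_eq_inter (measurableSet_noneOf hA far) _ μ).symm
    _ ≤ x i * (∏ k ∈ near, (1 - x k)) * μ (noneOf A far) := by
        gcongr
        exact (hcond i far hfar (measure_noneOf_ne_zero hx ih (filter_subset _ _))).trans
          (by gcongr)
    _ ≤ x i * μ (noneOf A S) := by
        rw [mul_assoc]
        gcongr

theorem lovasz_local_lemma_lopsided_asymmetric [NeZero μ] (hA : ∀ i, MeasurableSet (A i))
    (hx : ∀ i, x i < 1) (Γ : ι → Finset ι)
    (hcond : ∀ i B, (∀ j ∈ B, j ∉ Γ i ∧ j ≠ i) → μ (noneOf A B) ≠ 0 →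
      μ[A i | noneOf A B] ≤ x i * ∏ j ∈ Γ i, (1 - x j))
    (S : Finset ι) : 0 < μ (noneOf A S) :=
  pos_iff_ne_zero.2 <|
    measure_noneOf_ne_zero hx (fun T _ ↦ measure_noneOf_inter_le hA hx Γ hcond T) subset_rfl

lemma one_div_exp_mul_le (D : ℕ) :
    1 / (Real.exp 1 * (D + 1)) ≤ 1 / (D + 2) * (1 - 1 / (D + 2)) ^ D := by
  have he : (1 + ((D + 1 : ℕ) : ℝ)⁻¹) ^ (D + 1) ≤ Real.exp 1 := Real.one_add_inv_pow_le_exp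
  push_cast at he
  have hsub : 1 - 1 / ((D : ℝ) + 2) = (1 + ((D : ℝ) + 1)⁻¹)⁻¹ := by
    field_simp; ring
  have hdiv : 1 / ((D : ℝ) + 2) = (1 + ((D : ℝ) + 1)⁻¹)⁻¹ / (D + 1) := by
    field_simp; ring
  rw [hsub, hdiv, div_mul_eq_mul_div, ← pow_succ', inv_pow, one_div, mul_inv,
    ← div_eq_mul_inv]
  gcongr

lemma ofReal_one_div_exp_mul_le (D : ℕ) :
    ENNReal.ofReal (1 / (Real.exp 1 * (D + 1))) ≤
      ENNReal.ofReal (1 / (D + 2)) * (1 - ENNReal.ofReal (1 / (D + 2))) ^ D := by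
  rw [← ENNReal.ofReal_one, ← ENNReal.ofReal_sub _ (by positivity), ← ENNReal.ofReal_pow
    (by rw [sub_nonneg, div_le_one (by positivity)]; linarith),
    ← ENNReal.ofReal_mul (by positivity)]
  exact ENNReal.ofReal_le_ofReal (one_div_exp_mul_le D)

end LovaszLocalLemma

open LovaszLocalLemma

/-- Symmetric lopsided Lovász Local Lemma: if for every event `A_i` there is a set
`Γ(A_i)` of at most `D` of the events such that for every subfamily `B` of events
avoiding `Γ(A_i) ∪ {A_i}` (whose intersection of complements has positive probability)
one has `P(A_i | ⋂_{B ∈ B} B̄) ≤ 1/(e(D+1))`, then `P(⋂ Ā_i) > 0`. -/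
theorem lovasz_local_lemma_lopsided
    {Ω : Type*} [MeasureSpace Ω] [IsProbabilityMeasure (ℙ : Measure Ω)]
    {n : ℕ} (A : Fin n → Set Ω) (hA : ∀ i, MeasurableSet (A i))
    (D : ℕ) (Γ : Fin n → Finset (Fin n)) (hΓ : ∀ i, (Γ i).card ≤ D)
    (hcond : ∀ i : Fin n, ∀ B : Finset (Fin n),
      (∀ j ∈ B, j ∉ Γ i ∧ j ≠ i) →
      ℙ (⋂ j ∈ B, (A j)ᶜ) ≠ 0 →
      ℙ[|⋂ j ∈ B, (A j)ᶜ] (A i) ≤ ENNReal.ofReal (1 / (Real.exp 1 * (D + 1)))) :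
    0 < ℙ (⋂ i, (A i)ᶜ) := by
  -- not `1 / (D + 1)`, which is `1` when `D = 0`
  set x := ENNReal.ofReal (1 / (D + 2))
  have hx : x < 1 := ENNReal.ofReal_lt_one.2 <| by
    rw [div_lt_one (by positivity)]; linarith
  have hprod (i : Fin n) : x * (1 - x) ^ D ≤ x * ∏ _j ∈ Γ i, (1 - x) := by
    rw [prod_const]
    exact mul_le_mul_right (pow_le_pow_right_of_le_one' tsub_le_self (hΓ i)) x
  simpa [noneOf] using lovasz_local_lemma_lopsided_asymmetric (x := fun _ ↦ x) hA (fun _ ↦ hx) Γ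
    (fun i B hB hB0 ↦ (hcond i B hB hB0).trans
      ((ofReal_one_div_exp_mul_le D).trans (hprod i))) Finset.univ
end

section
/- Let G=(V,E) be a d-regular finite simple graph with d ≥ 54000, let k = 0.025, s = 0.0031, and K = ⌈kd⌉. Assign to every vertex v a colour C_v = (O_v, I_v) chosen independently and uniformly at random from [K]². Fix a vertex v and let d_{S*}(v) denote the number of neighbours w of v with O_v = O_w or I_v = I_w. Then P(d_{S*}(v) ≥ sd) < 1/(3 e d³). -/
open MeasureTheory ProbabilityTheory
open scoped ENNReal
open Finset

section helpers

lemma meas_mem_finset {Ω : Type*} [MeasurableSpace Ω] (μ : Measure Ω)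
    {g : Ω → ℕ × ℕ} (hg : Measurable g) (box : Finset (ℕ × ℕ)) (c : ℝ≥0∞)
    (hu : ∀ a, μ {ω | g ω = a} = if a ∈ box then c else 0) (S : Finset (ℕ × ℕ)) :
    μ {ω | g ω ∈ S} = (S ∩ box).card * c := by
  have h1 : {ω | g ω ∈ S} = ⋃ a ∈ S, g ⁻¹' {a} := by
    ext ω; simp
  rw [h1, measure_biUnion_finset]
  · have : ∀ a ∈ S, μ (g ⁻¹' {a}) = if a ∈ box then c else 0 := by
      intro a _
      rw [← hu a]; rfl
    rw [Finset.sum_congr rfl this, Finset.sum_ite_mem, Finset.sum_const, nsmul_eq_mul]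
  · intro a _ b _ hab
    exact Set.disjoint_left.2 fun ω ha hb => hab (by
      simp only [Set.mem_preimage, Set.mem_singleton_iff] at ha hb; rw [← ha, ← hb])
  · exact fun a _ => hg (measurableSet_singleton a)

lemma card_match (K : ℕ) (hK : 1 ≤ K) (c : ℕ × ℕ)
    (hc : c ∈ Finset.Icc 1 K ×ˢ Finset.Icc 1 K) :
    ((Finset.Icc 1 K ×ˢ Finset.Icc 1 K).filter
      (fun a => c.1 = a.1 ∨ c.2 = a.2)).card = 2 * K - 1 := by
  rw [Finset.mem_product] at hc
  have h1 : (Finset.Icc 1 K ×ˢ Finset.Icc 1 K).filter (fun a => c.1 = a.1 ∨ c.2 = a.2)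
      = ({c.1} ×ˢ Finset.Icc 1 K) ∪ (Finset.Icc 1 K ×ˢ {c.2}) := by
    ext a
    simp only [Finset.mem_filter, Finset.mem_product, Finset.mem_union, Finset.mem_singleton]
    constructor
    · rintro ⟨⟨h1, h2⟩, h3 | h3⟩
      · exact Or.inl ⟨h3.symm, h2⟩
      · exact Or.inr ⟨h1, h3.symm⟩
    · rintro (⟨h1, h2⟩ | ⟨h1, h2⟩)
      · exact ⟨⟨h1 ▸ hc.1, h2⟩, Or.inl h1.symm⟩
      · exact ⟨⟨h1, h2 ▸ hc.2⟩, Or.inr h2.symm⟩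
  have h2 : ({c.1} ×ˢ Finset.Icc 1 K) ∩ (Finset.Icc 1 K ×ˢ {c.2}) = {c} := by
    ext a
    simp only [Finset.mem_inter, Finset.mem_product, Finset.mem_singleton]
    constructor
    · rintro ⟨⟨h1, _⟩, _, h2⟩
      exact Prod.ext h1 h2
    · rintro rfl
      exact ⟨⟨rfl, hc.2⟩, hc.1, rfl⟩
  have h3 := Finset.card_union_add_card_inter ({c.1} ×ˢ Finset.Icc 1 K)
    (Finset.Icc 1 K ×ˢ {c.2})
  rw [h2] at h3
  rw [h1]
  simp only [Finset.card_product, Finset.card_singleton, Nat.card_Icc] at h3 ⊢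
  omega

lemma log3_lt : Real.log 3 < 1.1 := by
  rw [Real.log_lt_iff_lt_exp (by norm_num)]
  have h1 : (2.7182818283 : ℝ) < Real.exp 1 := Real.exp_one_gt_d9
  have h2 : ∑ i ∈ Finset.range 4, (0.1:ℝ) ^ i / Nat.factorial i ≤ Real.exp 0.1 :=
    Real.sum_le_exp_of_nonneg (by norm_num) 4
  have h3 : Real.exp (1.1:ℝ) = Real.exp 1 * Real.exp 0.1 := by
    rw [← Real.exp_add]; norm_num
  norm_num [Finset.sum_range_succ, Nat.factorial] at h2
  rw [h3]
  nlinarith [Real.exp_pos (0.1:ℝ)]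

lemma log54000_lt : Real.log 54000 < 10.9 := by
  rw [Real.log_lt_iff_lt_exp (by norm_num)]
  have h1 : (2.7182818283 : ℝ) < Real.exp 1 := Real.exp_one_gt_d9
  have h2 : ∑ i ∈ Finset.range 6, (0.9:ℝ) ^ i / Nat.factorial i ≤ Real.exp 0.9 :=
    Real.sum_le_exp_of_nonneg (by norm_num) 6
  have h3 : Real.exp (10.9:ℝ) = Real.exp 1 ^ 10 * Real.exp 0.9 := by
    rw [← Real.exp_nat_mul, ← Real.exp_add]; norm_num
  norm_num [Finset.sum_range_succ, Nat.factorial] at h2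
  rw [h3]
  have h4 : (2.7182818283:ℝ) ^ 10 ≤ Real.exp 1 ^ 10 :=
    pow_le_pow_left₀ (by norm_num) h1.le 10
  have h5 : (22026.465:ℝ) ≤ (2.7182818283:ℝ)^10 := by norm_num
  nlinarith [Real.exp_pos (0.9:ℝ)]

lemma key_log (x : ℝ) (hx : 54000 ≤ x) :
    Real.log 3 + 81 + 3 * Real.log x < 0.0031 * x * Real.log 2 := by
  have hx0 : (0:ℝ) < x := by linarith
  have l2 : (0.6931471803:ℝ) < Real.log 2 := Real.log_two_gt_d9
  have lx : Real.log x ≤ Real.log 54000 + (x / 54000 - 1) := by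
    have h := Real.log_le_sub_one_of_pos (show (0:ℝ) < x / 54000 by positivity)
    have : Real.log (x / 54000) = Real.log x - Real.log 54000 := by
      rw [Real.log_div (by linarith) (by norm_num)]
    linarith
  nlinarith [log3_lt, log54000_lt]

lemma numeric_bound (x : ℝ) (hx : 54000 ≤ x) :
    Real.exp 80 / 2 ^ (⌈(0.0031:ℝ) * x⌉₊) < 1 / (3 * Real.exp 1 * x ^ 3) := by
  have hx0 : (0:ℝ) < x := by linarith
  set m : ℕ := ⌈(0.0031:ℝ) * x⌉₊ with hm
  have hmx : (0.0031:ℝ) * x ≤ m := Nat.le_ceil _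
  have h2m : (2:ℝ) ^ m = Real.exp (m * Real.log 2) := by
    rw [Real.exp_nat_mul, Real.exp_log (by norm_num)]
  have hkey : Real.log 3 + 81 + 3 * Real.log x < m * Real.log 2 := by
    have := key_log x hx
    nlinarith [Real.log_two_gt_d9]
  have hx3 : Real.exp (3 * Real.log x) = x ^ 3 := by
    rw [show (3:ℝ) * Real.log x = Real.log (x ^ 3) by rw [Real.log_pow]; norm_num,
      Real.exp_log (by positivity)]
  have hlhs : 3 * Real.exp 1 * x ^ 3 * Real.exp 80 = Real.exp (Real.log 3 + 81 + 3 * Real.log x) := by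
    rw [show Real.log 3 + 81 + 3 * Real.log x = Real.log 3 + 3 * Real.log x + 1 + 80 by ring,
      Real.exp_add, Real.exp_add, Real.exp_add, Real.exp_log (by norm_num : (0:ℝ) < 3), hx3]
    ring
  rw [div_lt_div_iff₀ (by positivity) (by positivity), h2m, one_mul]
  calc Real.exp 80 * (3 * Real.exp 1 * x ^ 3)
      = Real.exp (Real.log 3 + 81 + 3 * Real.log x) := by rw [← hlhs]; ring
    _ < Real.exp (↑m * Real.log 2) := Real.exp_lt_exp.2 hkey

lemma prod_indicator_biInter {ι Ω' : Type*} (t : Finset ι) (A : ι → Set Ω') (ω : Ω') :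
    ∏ w ∈ t, (A w).indicator (fun _ => (1:ℝ≥0∞)) ω
      = (⋂ w ∈ t, A w).indicator (fun _ => (1:ℝ≥0∞)) ω := by
  by_cases h : ω ∈ ⋂ w ∈ t, A w
  · rw [Set.indicator_of_mem h]
    refine Finset.prod_eq_one fun w hw => ?_
    have : ω ∈ A w := by
      simp only [Set.mem_iInter] at h
      exact h w hw
    rw [Set.indicator_of_mem this]
  · rw [Set.indicator_of_notMem h]
    simp only [Set.mem_iInter, not_forall] at h
    obtain ⟨w, hw, hnw⟩ := h
    exact Finset.prod_eq_zero hw (Set.indicator_of_notMem hnw _)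

end helpers


/-- For a `d`-regular graph with `d ≥ 54000`, `k = 0.025`, `s = 0.0031`, `K = ⌈kd⌉` and
colours `C_v = (O_v, I_v)` chosen independently and uniformly at random from `[K]²`,
for any fixed vertex `v`, the number `d_{S*}(v)` of neighbours `w` of `v` with
`O_v = O_w` or `I_v = I_w` satisfies `P(d_{S*}(v) ≥ sd) < 1/(3ed³)`. -/
theorem special_degree_bound
    {V : Type*} [Fintype V] (G : SimpleGraph V) [DecidableRel G.Adj]
    (d : ℕ) (hd : 54000 ≤ d) (hreg : G.IsRegularOfDegree d)
    {Ω : Type*} [MeasureSpace Ω] [IsProbabilityMeasure (ℙ : Measure Ω)]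
    (C : V → Ω → ℕ × ℕ) (hmeas : ∀ v, Measurable (C v))
    (hindep : iIndepFun C ℙ)
    (hunif : ∀ (v : V) (a : ℕ × ℕ), ℙ {ω | C v ω = a} =
      if a ∈ Finset.Icc 1 (⌈(0.025 : ℝ) * d⌉₊) ×ˢ Finset.Icc 1 (⌈(0.025 : ℝ) * d⌉₊)
      then ((⌈(0.025 : ℝ) * d⌉₊ : ℝ≥0∞) ^ 2)⁻¹ else 0)
    (v : V) :
    ℙ {ω | (0.0031 : ℝ) * d ≤
        (({w ∈ G.neighborSet v |
          (C v ω).1 = (C w ω).1 ∨ (C v ω).2 = (C w ω).2}).ncard : ℝ)} <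
      ENNReal.ofReal (1 / (3 * Real.exp 1 * (d : ℝ) ^ 3)) := by
  classical
  set K : ℕ := ⌈(0.025 : ℝ) * d⌉₊ with hKdef
  set box : Finset (ℕ × ℕ) := Finset.Icc 1 K ×ˢ Finset.Icc 1 K with hboxdef
  have hdR : (54000 : ℝ) ≤ (d : ℝ) := by exact_mod_cast hd
  have hKR : (0.025 : ℝ) * d ≤ K := Nat.le_ceil _
  have hK1 : 1 ≤ K := by
    have : (1 : ℝ) ≤ (K : ℝ) := by nlinarith
    exact_mod_cast this
  have hKne : (K : ℝ≥0∞) ≠ 0 := by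
    simp only [ne_eq, Nat.cast_eq_zero]; omega
  have hK2ne : ((K : ℝ≥0∞) ^ 2) ≠ 0 := pow_ne_zero _ hKne
  have hK2top : ((K : ℝ≥0∞) ^ 2) ≠ ⊤ := by
    exact ENNReal.pow_ne_top (ENNReal.natCast_ne_top K)
  -- all subsets of countable types are measurable
  have hNN : ∀ s : Set (ℕ × ℕ), MeasurableSet s := fun s => s.to_countable.measurableSet
  -- uniform measure of finsets
  have hmemS : ∀ (u : V) (S : Finset (ℕ × ℕ)),
      ℙ {ω | C u ω ∈ S} = (S ∩ box).card * ((K : ℝ≥0∞) ^ 2)⁻¹ :=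
    fun u S => meas_mem_finset ℙ (hmeas u) box _ (hunif u) S
  have hboxcard : box.card = K * K := by
    simp [hboxdef, Nat.card_Icc]
  have hboxnull : ∀ u : V, ℙ {ω | C u ω ∉ box} = 0 := by
    intro u
    have h1 : ℙ {ω | C u ω ∈ box} = 1 := by
      rw [hmemS u box, Finset.inter_self, hboxcard]
      push_cast
      rw [← pow_two]
      exact ENNReal.mul_inv_cancel hK2ne hK2top
    have h2 : {ω | C u ω ∉ box} = {ω | C u ω ∈ box}ᶜ := rfl
    have hms : MeasurableSet {ω | C u ω ∈ box} := hmeas u (hNN _)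
    rw [h2, measure_compl hms (measure_ne_top _ _), h1, measure_univ, tsub_self]
  -- the match events
  set A : V → Set Ω := fun w =>
    {ω | (C v ω).1 = (C w ω).1 ∨ (C v ω).2 = (C w ω).2} with hAdef
  have hA : ∀ w, MeasurableSet (A w) := by
    intro w
    have : A w = (fun ω => (C v ω, C w ω)) ⁻¹'
        {q : (ℕ × ℕ) × (ℕ × ℕ) | q.1.1 = q.2.1 ∨ q.1.2 = q.2.2} := rfl
    rw [this]
    exact ((hmeas v).prodMk (hmeas w)) (Set.to_countable _).measurableSet
  set Sc : ℕ × ℕ → Finset (ℕ × ℕ) := fun c => box.filter (fun a => c.1 = a.1 ∨ c.2 = a.2)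
    with hScdef
  set p : ℝ≥0∞ := ((2 * K - 1 : ℕ) : ℝ≥0∞) / (K : ℝ≥0∞) ^ 2 with hpdef
  have hpSc : ∀ (u : V) (c : ℕ × ℕ), c ∈ box → ℙ {ω | C u ω ∈ Sc c} = p := by
    intro u c hc
    rw [hmemS u (Sc c), Finset.inter_eq_left.2 (Finset.filter_subset _ _),
      card_match K hK1 c hc, hpdef, ENNReal.div_eq_inv_mul, mul_comm]
  -- core independence computation
  have hcore : ∀ T : Finset V, v ∉ T → ℙ (⋂ w ∈ T, A w) = p ^ T.card := by
    intro T hvT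
    have hDc : ∀ c ∈ box, ℙ ((C v ⁻¹' {c}) ∩ ⋂ w ∈ T, C w ⁻¹' ↑(Sc c))
        = ((K : ℝ≥0∞) ^ 2)⁻¹ * p ^ T.card := by
      intro c hc
      have hmeascomap : ∀ u ∈ insert v T, MeasurableSet[MeasurableSpace.comap (C u) inferInstance]
          (if u = v then C v ⁻¹' {c} else C u ⁻¹' ↑(Sc c)) := by
        intro u _
        by_cases hu : u = v
        · subst hu; simp only [if_pos rfl]; exact ⟨{c}, hNN _, rfl⟩
        · simp only [if_neg hu]; exact ⟨↑(Sc c), hNN _, rfl⟩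
      have hind := hindep.meas_biInter (S := insert v T) hmeascomap
      have hiInter : (⋂ u ∈ insert v T, if u = v then C v ⁻¹' {c} else C u ⁻¹' ↑(Sc c))
          = (C v ⁻¹' {c}) ∩ ⋂ w ∈ T, C w ⁻¹' ↑(Sc c) := by
        rw [Finset.set_biInter_insert, if_pos rfl]
        congr 1
        exact Set.iInter₂_congr fun w hw => by rw [if_neg (fun h : w = v => hvT (h ▸ hw))]
      have hprod : ∏ u ∈ insert v T, ℙ (if u = v then C v ⁻¹' {c} else C u ⁻¹' ↑(Sc c))
          = ((K : ℝ≥0∞) ^ 2)⁻¹ * p ^ T.card := by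
        rw [Finset.prod_insert hvT, if_pos rfl]
        congr 1
        · have : (C v ⁻¹' {c} : Set Ω) = {ω | C v ω = c} := rfl
          rw [this, hunif v c, if_pos hc]
        · have hTfac : ∀ w ∈ T, ℙ (if w = v then C v ⁻¹' {c} else C w ⁻¹' ↑(Sc c)) = p := by
            intro w hw
            rw [if_neg (fun h : w = v => hvT (h ▸ hw))]
            exact hpSc w c hc
          rw [Finset.prod_congr rfl hTfac, Finset.prod_const]
      rw [← hiInter, hind, hprod]
    have hB : MeasurableSet (⋂ w ∈ T, A w) :=
      Set.Finite.measurableSet_biInter T.finite_toSet (fun w _ => hA w)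
    have hpre : MeasurableSet (C v ⁻¹' (↑box : Set (ℕ × ℕ))) := hmeas v (hNN _)
    have hnull : ℙ ((⋂ w ∈ T, A w) \ C v ⁻¹' (↑box : Set (ℕ × ℕ))) = 0 := by
      refine measure_mono_null ?_ (hboxnull v)
      intro ω hω
      exact hω.2
    have hsplit : ℙ (⋂ w ∈ T, A w) = ℙ ((⋂ w ∈ T, A w) ∩ C v ⁻¹' (↑box : Set (ℕ × ℕ))) := by
      rw [← measure_inter_add_diff _ hpre, hnull, add_zero]
    have hunion : (⋂ w ∈ T, A w) ∩ C v ⁻¹' (↑box : Set (ℕ × ℕ))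
        = ⋃ c ∈ box, ((⋂ w ∈ T, A w) ∩ C v ⁻¹' {c}) := by
      ext ω
      simp only [Set.mem_inter_iff, Set.mem_preimage, Finset.mem_coe, Set.mem_iUnion,
        Set.mem_singleton_iff]
      constructor
      · rintro ⟨h1, h2⟩
        exact ⟨C v ω, h2, h1, rfl⟩
      · rintro ⟨c, hc, h1, h2⟩
        exact ⟨h1, h2 ▸ hc⟩
    have hterm : ∀ c ∈ box, ℙ ((⋂ w ∈ T, A w) ∩ C v ⁻¹' {c})
        = ((K : ℝ≥0∞) ^ 2)⁻¹ * p ^ T.card := by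
      intro c hc
      rw [← hDc c hc]
      apply le_antisymm
      · set Z : Set Ω := ⋃ w ∈ T, {ω | C w ω ∉ box} with hZdef
        have hZ : ℙ Z = 0 :=
          (measure_biUnion_null_iff T.countable_toSet).2 (fun w _ => hboxnull w)
        have hsub : (⋂ w ∈ T, A w) ∩ C v ⁻¹' {c}
            ⊆ ((C v ⁻¹' {c}) ∩ ⋂ w ∈ T, C w ⁻¹' ↑(Sc c)) ∪ Z := by
          rintro ω ⟨h1, h2⟩
          by_cases hz : ω ∈ Z
          · exact Or.inr hz
          · refine Or.inl ⟨h2, Set.mem_iInter₂.2 fun w hw => ?_⟩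
            have hboxw : C w ω ∈ box := by
              by_contra hmem
              exact hz (Set.mem_biUnion hw hmem)
            have hmatch := Set.mem_iInter₂.1 h1 w hw
            simp only [hAdef, Set.mem_setOf_eq] at hmatch
            have hcv : C v ω = c := h2
            simp only [Set.mem_preimage, Finset.mem_coe, hScdef, Finset.mem_filter]
            refine ⟨hboxw, ?_⟩
            rcases hmatch with h | h
            · exact Or.inl (by rw [← hcv]; exact h)
            · exact Or.inr (by rw [← hcv]; exact h)
        calc ℙ ((⋂ w ∈ T, A w) ∩ C v ⁻¹' {c})
            ≤ ℙ (((C v ⁻¹' {c}) ∩ ⋂ w ∈ T, C w ⁻¹' ↑(Sc c)) ∪ Z) := measure_mono hsub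
          _ ≤ ℙ ((C v ⁻¹' {c}) ∩ ⋂ w ∈ T, C w ⁻¹' ↑(Sc c)) + ℙ Z := measure_union_le _ _
          _ = ℙ ((C v ⁻¹' {c}) ∩ ⋂ w ∈ T, C w ⁻¹' ↑(Sc c)) := by rw [hZ, add_zero]
      · apply measure_mono
        rintro ω ⟨h1, h2⟩
        refine ⟨Set.mem_iInter₂.2 fun w hw => ?_, h1⟩
        have hin := Set.mem_iInter₂.1 h2 w hw
        simp only [Set.mem_preimage, Finset.mem_coe, hScdef, Finset.mem_filter] at hin
        have hcv : C v ω = c := h1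
        simp only [hAdef, Set.mem_setOf_eq]
        rcases hin.2 with h | h
        · exact Or.inl (by rw [hcv]; exact h)
        · exact Or.inr (by rw [hcv]; exact h)
    have hdisj : (↑box : Set (ℕ × ℕ)).PairwiseDisjoint
        (fun c => (⋂ w ∈ T, A w) ∩ C v ⁻¹' {c}) := by
      intro a _ b _ hab
      refine Set.disjoint_left.2 fun ω ha hb => hab ?_
      have h1 : C v ω = a := ha.2
      have h2 : C v ω = b := hb.2
      rw [← h1, ← h2]
    have hms : ∀ c ∈ box, MeasurableSet ((⋂ w ∈ T, A w) ∩ C v ⁻¹' {c}) :=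
      fun c _ => hB.inter (hmeas v (hNN _))
    rw [hsplit, hunion, measure_biUnion_finset hdisj hms, Finset.sum_congr rfl hterm,
      Finset.sum_const, nsmul_eq_mul, hboxcard, ← mul_assoc]
    push_cast
    rw [← pow_two, ENNReal.mul_inv_cancel hK2ne hK2top, one_mul]
  -- counting function
  set N : Finset V := G.neighborFinset v with hNdef
  have hNcard : N.card = d := by
    rw [hNdef, SimpleGraph.card_neighborFinset_eq_degree]
    exact hreg v
  have hvN : v ∉ N := by
    rw [hNdef]
    exact SimpleGraph.notMem_neighborFinset_self G v
  set F : Ω → ℕ := fun ω =>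
    (N.filter (fun w => (C v ω).1 = (C w ω).1 ∨ (C v ω).2 = (C w ω).2)).card with hFdef
  have hFA : ∀ ω, F ω = ∑ w ∈ N, if ω ∈ A w then 1 else 0 := by
    intro ω
    rw [hFdef]
    simp only [Finset.card_filter]
    refine Finset.sum_congr rfl fun w _ => ?_
    by_cases h : (C v ω).1 = (C w ω).1 ∨ (C v ω).2 = (C w ω).2
    · rw [if_pos h, if_pos (show ω ∈ A w from h)]
    · rw [if_neg h, if_neg (show ω ∉ A w from h)]
  have hf2 : ∀ ω, (2:ℝ≥0∞) ^ F ω = ∏ w ∈ N, ((A w).indicator (fun _ => (1:ℝ≥0∞)) ω + 1) := by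
    intro ω
    rw [hFA ω, ← Finset.prod_pow_eq_pow_sum]
    refine Finset.prod_congr rfl fun w _ => ?_
    by_cases h : ω ∈ A w
    · rw [if_pos h, Set.indicator_of_mem h]
      norm_num
    · rw [if_neg h, Set.indicator_of_notMem h]
      norm_num
  -- the integral of 2^F
  have hint : ∫⁻ ω, (2:ℝ≥0∞) ^ F ω ∂ℙ = (1 + p) ^ d := by
    have hrw : ∀ ω, (2:ℝ≥0∞) ^ F ω
        = ∑ t ∈ N.powerset, (⋂ w ∈ t, A w).indicator (fun _ => (1:ℝ≥0∞)) ω := by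
      intro ω
      rw [hf2 ω, Finset.prod_add]
      refine Finset.sum_congr rfl fun t _ => ?_
      rw [← prod_indicator_biInter t A ω]
      simp
    have hmt : ∀ t : Finset V, MeasurableSet (⋂ w ∈ t, A w) :=
      fun t => Set.Finite.measurableSet_biInter t.finite_toSet (fun w _ => hA w)
    rw [lintegral_congr hrw, lintegral_finset_sum _
      (fun t _ => Measurable.indicator measurable_const (hmt t))]
    have hterm2 : ∀ t ∈ N.powerset,
        (∫⁻ ω, (⋂ w ∈ t, A w).indicator (fun _ => (1:ℝ≥0∞)) ω ∂ℙ) = p ^ t.card := by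
      intro t ht
      rw [lintegral_indicator (hmt t) _, setLIntegral_one]
      exact hcore t (fun hvt => hvN (Finset.mem_powerset.1 ht hvt))
    rw [Finset.sum_congr rfl hterm2,
      Finset.sum_powerset_apply_card (f := fun j => p ^ j), hNcard,
      add_comm (1:ℝ≥0∞) p, add_pow]
    refine Finset.sum_congr rfl fun j _ => ?_
    rw [one_pow, mul_one, nsmul_eq_mul, mul_comm]
  -- Markov / Chernoff step
  set m : ℕ := ⌈(0.0031:ℝ) * d⌉₊ with hmdef
  have h2mne : ((2:ℝ≥0∞) ^ m) ≠ 0 := pow_ne_zero _ (by norm_num)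
  have h2mtop : ((2:ℝ≥0∞) ^ m) ≠ ⊤ := ENNReal.pow_ne_top (by norm_num)
  have hcount : ∀ ω, ({w ∈ G.neighborSet v |
      (C v ω).1 = (C w ω).1 ∨ (C v ω).2 = (C w ω).2}).ncard = F ω := by
    intro ω
    have hseteq : {w ∈ G.neighborSet v | (C v ω).1 = (C w ω).1 ∨ (C v ω).2 = (C w ω).2}
        = ↑(N.filter (fun w => (C v ω).1 = (C w ω).1 ∨ (C v ω).2 = (C w ω).2)) := by
      ext w
      simp [hNdef, SimpleGraph.mem_neighborSet, Set.mem_setOf_eq]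
    rw [hseteq, Set.ncard_coe_finset]
  have hEsub : {ω | (0.0031 : ℝ) * d ≤
        (({w ∈ G.neighborSet v |
          (C v ω).1 = (C w ω).1 ∨ (C v ω).2 = (C w ω).2}).ncard : ℝ)}
      ⊆ {ω | (2:ℝ≥0∞) ^ m ≤ (2:ℝ≥0∞) ^ F ω} := by
    intro ω hω
    simp only [Set.mem_setOf_eq] at hω ⊢
    rw [hcount ω] at hω
    exact pow_le_pow_right₀ one_le_two (Nat.ceil_le.2 hω)
  have hmeasF : Measurable fun ω => (2:ℝ≥0∞) ^ F ω := by
    have hFm : Measurable F := by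
      have : F = fun ω => ∑ w ∈ N, if ω ∈ A w then 1 else 0 := funext hFA
      rw [this]
      exact Finset.measurable_sum _ fun w _ =>
        Measurable.ite (hA w) measurable_const measurable_const
    exact measurable_from_top.comp hFm
  have hmarkov := mul_meas_ge_le_lintegral₀ (μ := ℙ) hmeasF.aemeasurable ((2:ℝ≥0∞) ^ m)
  rw [hint] at hmarkov
  have hP2 : ℙ {ω | (2:ℝ≥0∞) ^ m ≤ (2:ℝ≥0∞) ^ F ω} ≤ (1 + p) ^ d / (2:ℝ≥0∞) ^ m := by
    rw [ENNReal.le_div_iff_mul_le (Or.inl h2mne) (Or.inl h2mtop), mul_comm]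
    exact hmarkov
  -- convert to real bounds
  have hKRpos : (0:ℝ) < (K:ℝ) := by
    have : (1:ℝ) ≤ (K:ℝ) := by exact_mod_cast hK1
    linarith
  have hple : p ≤ ENNReal.ofReal (2 / (K:ℝ)) := by
    have hofr : ENNReal.ofReal (2 / (K:ℝ)) = (2:ℝ≥0∞) / (K:ℝ≥0∞) := by
      rw [ENNReal.ofReal_div_of_pos hKRpos, ENNReal.ofReal_ofNat, ENNReal.ofReal_natCast]
    rw [hofr, hpdef]
    have h2 : ((2 * K - 1 : ℕ) : ℝ≥0∞) ≤ ((2 * K : ℕ) : ℝ≥0∞) := by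
      exact Nat.cast_le.2 (Nat.sub_le _ _)
    refine le_trans (ENNReal.div_le_div_right h2 _) ?_
    rw [pow_two]
    push_cast
    rw [mul_comm (2:ℝ≥0∞) (K:ℝ≥0∞), ENNReal.mul_div_mul_left _ _ hKne (ENNReal.natCast_ne_top K)]
  have hplei : (1 + p) ≤ ENNReal.ofReal (1 + 2 / (K:ℝ)) := by
    rw [ENNReal.ofReal_add (by norm_num) (by positivity), ENNReal.ofReal_one]
    exact add_le_add le_rfl hple
  have hpow : (1 + p) ^ d ≤ ENNReal.ofReal ((1 + 2 / (K:ℝ)) ^ d) := by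
    rw [ENNReal.ofReal_pow (by positivity)]
    exact pow_le_pow_left' hplei d
  have hexp : ((1:ℝ) + 2 / (K:ℝ)) ^ d ≤ Real.exp 80 := by
    have h1 : (1:ℝ) + 2 / K ≤ Real.exp (2 / K) := by
      have := Real.add_one_le_exp (2 / (K:ℝ))
      linarith
    have h2 : ((1:ℝ) + 2 / K) ^ d ≤ Real.exp (2 / (K:ℝ)) ^ d :=
      pow_le_pow_left₀ (by positivity) h1 d
    have h3 : Real.exp (2 / (K:ℝ)) ^ d = Real.exp (d * (2 / K)) := (Real.exp_nat_mul _ d).symm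
    have h4 : (d:ℝ) * (2 / K) ≤ 80 := by
      rw [mul_div_assoc', div_le_iff₀ hKRpos]
      nlinarith
    calc ((1:ℝ) + 2 / K) ^ d ≤ Real.exp (d * (2 / K)) := by rw [← h3]; exact h2
      _ ≤ Real.exp 80 := Real.exp_le_exp.2 h4
  have hfinal : (1 + p) ^ d / (2:ℝ≥0∞) ^ m ≤ ENNReal.ofReal (Real.exp 80 / 2 ^ m) := by
    rw [ENNReal.ofReal_div_of_pos (by positivity), ENNReal.ofReal_pow (by norm_num),
      ENNReal.ofReal_ofNat]
    exact ENNReal.div_le_div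
      (le_trans hpow (ENNReal.ofReal_le_ofReal (by exact_mod_cast hexp))) le_rfl
  refine lt_of_le_of_lt (le_trans (le_trans (measure_mono hEsub) hP2) hfinal) ?_
  rw [ENNReal.ofReal_lt_ofReal_iff (by
    have hd0 : (0:ℝ) < (d:ℝ) := by linarith
    positivity)]
  exact numeric_bound (d:ℝ) hdR
end

section
/- Let G=(V,E) be a d-regular finite simple graph with d ≥ 54000, let k = 0.025, u = 0.131, and K = ⌈kd⌉. Fix a vertex v and fix arbitrarily the colours C_w ∈ [K]² of all vertices w ∈ V \ N_G(v) (including v itself), and assign to each vertex of N_G(v) a colour chosen independently and uniformly at random from [K]². Let Z = |U*(v)| where U*(v) = {w ∈ N_G(v) : ∃ w' ∈ (N_G(w) ∪ N_G(v)) \ {w} with C_{w'} = C_w}. Then P(Z ≥ ud) < 1/(3 e d³). -/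
open MeasureTheory ProbabilityTheory
open scoped ENNReal

lemma measurableSet_of_countable {α : Type*} [Countable α] [MeasurableSpace α]
    [MeasurableSingletonClass α] (B : Set α) : MeasurableSet B :=
  (Set.to_countable B).measurableSet

lemma count_markov {Ω : Type*} [MeasureSpace Ω] {ι : Type*} (𝓢 : Finset ι) (F : ι → Set Ω)
    (hF : ∀ s ∈ 𝓢, MeasurableSet (F s)) (E : Set Ω) (c : ℕ) (hc : 0 < c)
    (hE : ∀ ω ∈ E, ∃ 𝓣 : Finset ι, 𝓣 ⊆ 𝓢 ∧ c ≤ 𝓣.card ∧ ∀ s ∈ 𝓣, ω ∈ F s) :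
    ℙ E ≤ (∑ s ∈ 𝓢, ℙ (F s)) / c := by
  classical
  set f : Ω → ℝ≥0∞ := fun ω => ∑ s ∈ 𝓢, (F s).indicator 1 ω with hf
  have hfm : Measurable f := by
    apply Finset.measurable_sum
    intro s hs
    exact measurable_one.indicator (hF s hs)
  have hsub : E ⊆ {ω | (c : ℝ≥0∞) ≤ f ω} := by
    intro ω hω
    obtain ⟨𝓣, h𝓣S, h𝓣c, h𝓣F⟩ := hE ω hω
    have h1 : (c : ℝ≥0∞) ≤ ∑ s ∈ 𝓣, (F s).indicator (1 : Ω → ℝ≥0∞) ω := by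
      have : ∀ s ∈ 𝓣, (F s).indicator (1 : Ω → ℝ≥0∞) ω = 1 := by
        intro s hs
        simp [Set.indicator_of_mem (h𝓣F s hs)]
      rw [Finset.sum_congr rfl this]
      simp
      exact_mod_cast h𝓣c
    refine h1.trans ?_
    exact Finset.sum_le_sum_of_subset h𝓣S
  have hlin : ∫⁻ ω, f ω = ∑ s ∈ 𝓢, ℙ (F s) := by
    rw [lintegral_finset_sum]
    · refine Finset.sum_congr rfl fun s hs => ?_
      rw [lintegral_indicator_one (hF s hs)]
    · intro s hs; exact measurable_one.indicator (hF s hs)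
  calc ℙ E ≤ ℙ {ω | (c : ℝ≥0∞) ≤ f ω} := measure_mono hsub
    _ ≤ (∫⁻ ω, f ω) / c := by
        refine meas_ge_le_lintegral_div hfm.aemeasurable ?_ ?_
        · exact_mod_cast hc.ne'
        · exact ENNReal.natCast_ne_top c
    _ = (∑ s ∈ 𝓢, ℙ (F s)) / c := by rw [hlin]

lemma exists_pairing {V : Type*} [DecidableEq V] (ord : V → ℕ) (hord : Function.Injective ord)
    (t : Finset V) :
    ∃ P : Finset (V × V), (∀ p ∈ P, p.1 ∈ t ∧ p.2 ∈ t ∧ ord p.1 < ord p.2) ∧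
      (∀ p ∈ P, ∀ q ∈ P, p ≠ q → p.1 ≠ q.1 ∧ p.1 ≠ q.2 ∧ p.2 ≠ q.1 ∧ p.2 ≠ q.2) ∧
      t.card / 2 ≤ P.card := by
  classical
  generalize hn : t.card = n
  induction n using Nat.strong_induction_on generalizing t with
  | _ n ih =>
    rcases Nat.lt_or_ge n 2 with h2 | h2
    · exact ⟨∅, by simp, by simp, by omega⟩
    · have h1 : 1 < t.card := by omega
      obtain ⟨a, ha, b, hb, hab⟩ := Finset.one_lt_card.mp h1
      -- order a b
      obtain ⟨x, y, hx, hy, hxy⟩ : ∃ x y, x ∈ t ∧ y ∈ t ∧ ord x < ord y := by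
        rcases lt_or_gt_of_ne (fun h => hab (hord h)) with h | h
        · exact ⟨a, b, ha, hb, h⟩
        · exact ⟨b, a, hb, ha, h⟩
      have hxyne : x ≠ y := fun h => by simp [h] at hxy
      set t' := t \ {x, y} with ht'
      have hcard' : t'.card = n - 2 := by
        rw [ht', Finset.card_sdiff_of_subset (by intro z hz; simp at hz; rcases hz with rfl | rfl <;> assumption)]
        rw [hn, Finset.card_insert_of_notMem (by simp [hxyne]), Finset.card_singleton]
      obtain ⟨P', hP'mem, hP'disj, hP'card⟩ := ih (n - 2) (by omega) t' hcard'
      have hxP' : ∀ p ∈ P', p.1 ≠ x ∧ p.1 ≠ y ∧ p.2 ≠ x ∧ p.2 ≠ y := by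
        intro p hp
        obtain ⟨h1', h2', _⟩ := hP'mem p hp
        rw [ht'] at h1' h2'
        simp only [Finset.mem_sdiff, Finset.mem_insert, Finset.mem_singleton] at h1' h2'
        push_neg at h1' h2'
        exact ⟨h1'.2.1, h1'.2.2, h2'.2.1, h2'.2.2⟩
      have hnotmem : (x, y) ∉ P' := by
        intro h
        exact (hxP' _ h).1 rfl
      refine ⟨insert (x, y) P', ?_, ?_, ?_⟩
      · intro p hp
        rcases Finset.mem_insert.mp hp with rfl | hp
        · exact ⟨hx, hy, hxy⟩
        · obtain ⟨h1', h2', h3'⟩ := hP'mem p hp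
          exact ⟨Finset.sdiff_subset h1', Finset.sdiff_subset h2', h3'⟩
      · intro p hp q hq hpq
        rcases Finset.mem_insert.mp hp with rfl | hp <;> rcases Finset.mem_insert.mp hq with rfl | hq
        · exact absurd rfl hpq
        · obtain ⟨e1, e2, e3, e4⟩ := hxP' q hq
          exact ⟨e1.symm, e3.symm, e2.symm, e4.symm⟩
        · exact hxP' p hp
        · exact hP'disj p hp q hq hpq
      · rw [Finset.card_insert_of_notMem hnotmem]
        omega

lemma measurableSet_of_countable' {α : Type*} [Countable α] [MeasurableSpace α]
    [MeasurableSingletonClass α] (B : Set α) : MeasurableSet B :=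
  (Set.to_countable B).measurableSet

lemma pair_event_bound {V Ω : Type*} [Fintype V] [MeasureSpace Ω]
    [IsProbabilityMeasure (ℙ : Measure Ω)]
    (C : V → Ω → ℕ × ℕ)
    (hindep : iIndepFun C ℙ)
    (N : Finset V) (SS : Finset (ℕ × ℕ)) (κ : ℕ) (hSS : SS.card = κ) (hκ : 0 < κ)
    (hprob_le : ∀ w ∈ N, ∀ a : ℕ × ℕ, ℙ {ω | C w ω = a} ≤ ((κ : ℝ≥0∞))⁻¹)
    (hnull : ∀ w ∈ N, ℙ {ω | C w ω ∉ SS} = 0)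
    (M : Finset (V × V)) (r : ℕ) (hMcard : M.card = r)
    (hMN : ∀ p ∈ M, p.1 ∈ N ∧ p.2 ∈ N ∧ p.1 ≠ p.2)
    (hMdisj : ∀ p ∈ M, ∀ q ∈ M, p ≠ q →
      p.1 ≠ q.1 ∧ p.1 ≠ q.2 ∧ p.2 ≠ q.1 ∧ p.2 ≠ q.2) :
    ℙ {ω | ∀ p ∈ M, C p.1 ω = C p.2 ω} ≤ ((κ : ℝ≥0∞))⁻¹ ^ r := by
  classical
  set GG : Finset ((V × V) → ℕ × ℕ) :=
    Fintype.piFinset (fun p : V × V => if p ∈ M then SS else {((0, 0) : ℕ × ℕ)}) with hGG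
  set Atom : ((V × V) → ℕ × ℕ) → Set Ω :=
    fun g => {ω | ∀ p ∈ M, C p.1 ω = g p ∧ C p.2 ω = g p} with hAtom
  -- covering
  have hcover : {ω | ∀ p ∈ M, C p.1 ω = C p.2 ω} ⊆
      (⋃ g ∈ GG, Atom g) ∪ (⋃ p ∈ M, {ω | C p.1 ω ∉ SS}) := by
    intro ω hω
    by_cases hall : ∀ p ∈ M, C p.1 ω ∈ SS
    · left
      have hmem : (fun p => if p ∈ M then C p.1 ω else (0, 0)) ∈ GG := by
        rw [hGG, Fintype.mem_piFinset]
        intro p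
        by_cases hp : p ∈ M <;> simp [hp, hall p]
      have hωatom : ω ∈ Atom (fun p => if p ∈ M then C p.1 ω else (0, 0)) := by
        rw [hAtom]
        refine fun p hp => ?_
        constructor
        · simp only [if_pos hp]
        · simp only [if_pos hp]
          exact (hω p hp).symm
      exact Set.mem_biUnion hmem hωatom
    · right
      push_neg at hall
      obtain ⟨p, hp, hpS⟩ := hall
      exact Set.mem_biUnion hp hpS
  -- atom bound
  have hatom : ∀ g ∈ GG, ℙ (Atom g) ≤ ((κ : ℝ≥0∞))⁻¹ ^ (2 * r) := by
    intro g hg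
    set T : Finset V := M.biUnion (fun p => {p.1, p.2}) with hT
    have hTcard : T.card = 2 * r := by
      rw [hT, Finset.card_biUnion]
      · rw [← hMcard]
        rw [Finset.sum_congr rfl (fun p hp => ?_)]
        · rw [Finset.sum_const, smul_eq_mul, mul_comm]
        · rw [Finset.card_insert_of_notMem (by simp [(hMN p hp).2.2]), Finset.card_singleton]
      · intro p hp q hq hpq
        obtain ⟨h1, h2, h3, h4⟩ := hMdisj p hp q hq hpq
        simp only [Finset.disjoint_insert_left, Finset.disjoint_singleton_left,
          Finset.mem_insert, Finset.mem_singleton]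
        constructor
        · rintro (h | h) <;> [exact h1 h; exact h2 h]
        · rintro (h | h) <;> [exact h3 h; exact h4 h]
    set sets : V → Set (ℕ × ℕ) :=
      fun w => {c | ∀ p ∈ M, (p.1 = w ∨ p.2 = w) → c = g p} with hsets
    have hAtomEq : Atom g = ⋂ w ∈ T, (C w) ⁻¹' (sets w) := by
      ext ω
      simp only [hAtom, Set.mem_setOf_eq, Set.mem_iInter, Set.mem_preimage, hsets]
      constructor
      · intro h w _ p hp hor
        rcases hor with h1 | h1
        · rw [← h1]; exact (h p hp).1
        · rw [← h1]; exact (h p hp).2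
      · intro h p hp
        have hp1T : p.1 ∈ T := by
          rw [hT]; exact Finset.mem_biUnion.mpr ⟨p, hp, by simp⟩
        have hp2T : p.2 ∈ T := by
          rw [hT]; exact Finset.mem_biUnion.mpr ⟨p, hp, by simp⟩
        exact ⟨h p.1 hp1T p hp (Or.inl rfl), h p.2 hp2T p hp (Or.inr rfl)⟩
    rw [hAtomEq]
    rw [hindep.meas_biInter (fun w _ => ⟨sets w, measurableSet_of_countable' _, rfl⟩)]
    calc ∏ w ∈ T, ℙ ((C w) ⁻¹' (sets w)) ≤ ((κ : ℝ≥0∞))⁻¹ ^ T.card := by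
          apply Finset.prod_le_pow_card
          intro w hw
          rw [hT, Finset.mem_biUnion] at hw
          obtain ⟨p, hp, hw12⟩ := hw
          simp only [Finset.mem_insert, Finset.mem_singleton] at hw12
          have hwN : w ∈ N := by
            rcases hw12 with rfl | rfl
            · exact (hMN p hp).1
            · exact (hMN p hp).2.1
          have hsub : (C w) ⁻¹' (sets w) ⊆ {ω | C w ω = g p} := by
            intro ω hω
            rcases hw12 with rfl | rfl
            · exact hω p hp (Or.inl rfl)
            · exact hω p hp (Or.inr rfl)
          exact le_trans (measure_mono hsub) (hprob_le w hwN (g p))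
      _ = ((κ : ℝ≥0∞))⁻¹ ^ (2 * r) := by rw [hTcard]
  -- assemble
  have hGGcard : GG.card = κ ^ r := by
    rw [hGG, Fintype.card_piFinset]
    have : ∀ p : V × V, (if p ∈ M then SS else {((0,0) : ℕ × ℕ)}).card
        = (if p ∈ M then κ else 1) := by
      intro p; by_cases hp : p ∈ M <;> simp [hp, hSS]
    rw [Finset.prod_congr rfl (fun p _ => this p)]
    rw [Finset.prod_ite_mem, Finset.univ_inter, Finset.prod_const, hMcard]
  calc ℙ {ω | ∀ p ∈ M, C p.1 ω = C p.2 ω}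
      ≤ ℙ ((⋃ g ∈ GG, Atom g) ∪ (⋃ p ∈ M, {ω | C p.1 ω ∉ SS})) := measure_mono hcover
    _ ≤ ℙ (⋃ g ∈ GG, Atom g) + ℙ (⋃ p ∈ M, {ω | C p.1 ω ∉ SS}) := measure_union_le _ _
    _ ≤ (∑ g ∈ GG, ℙ (Atom g)) + 0 := by
        gcongr
        · exact measure_biUnion_finset_le _ _
        · refine le_trans (measure_biUnion_finset_le _ _) ?_
          refine le_of_eq (Finset.sum_eq_zero fun p hp => ?_)
          exact hnull p.1 (hMN p hp).1
    _ ≤ (∑ _g ∈ GG, ((κ : ℝ≥0∞))⁻¹ ^ (2 * r)) + 0 := by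
        gcongr with g hg
        exact hatom g hg
    _ = (κ : ℝ≥0∞) ^ r * ((κ : ℝ≥0∞))⁻¹ ^ (2 * r) := by
        rw [add_zero, Finset.sum_const, hGGcard, nsmul_eq_mul]
        push_cast
        ring
    _ = ((κ : ℝ≥0∞))⁻¹ ^ r := by
        have hκ0 : (κ : ℝ≥0∞) ≠ 0 := by exact_mod_cast hκ.ne'
        have hκt : (κ : ℝ≥0∞) ≠ ⊤ := ENNReal.natCast_ne_top κ
        rw [two_mul, pow_add, ← mul_assoc, ← mul_pow, ENNReal.mul_inv_cancel hκ0 hκt, one_pow,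
          one_mul]

lemma choose_ratio (n m r : ℕ) (q b : ℝ) (hq : 0 ≤ q) (hb : 0 ≤ b)
    (h : (n : ℝ) * q ≤ b * ((m + 1 - r : ℕ) : ℝ)) :
    (Nat.choose n r : ℝ) * q ^ r ≤ b ^ r * (Nat.choose m r : ℝ) := by
  have h1 : (Nat.choose n r : ℝ) ≤ (n : ℝ) ^ r / (Nat.factorial r : ℝ) :=
    Nat.choose_le_pow_div r n
  have h2 : ((m + 1 - r : ℕ) : ℝ) ^ r / (Nat.factorial r : ℝ) ≤ (Nat.choose m r : ℝ) :=
    Nat.pow_le_choose r m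
  have hfpos : (0 : ℝ) < (Nat.factorial r : ℝ) := by
    exact_mod_cast Nat.factorial_pos r
  have hnq : (0 : ℝ) ≤ (n : ℝ) * q := by positivity
  have hpow : ((n : ℝ) * q) ^ r ≤ (b * ((m + 1 - r : ℕ) : ℝ)) ^ r :=
    pow_le_pow_left₀ hnq h r
  have hqr : (0:ℝ) ≤ q ^ r := by positivity
  calc (Nat.choose n r : ℝ) * q ^ r
      ≤ ((n : ℝ) ^ r / (Nat.factorial r : ℝ)) * q ^ r := mul_le_mul_of_nonneg_right h1 hqr
    _ = ((n : ℝ) * q) ^ r / (Nat.factorial r : ℝ) := by rw [mul_pow]; ring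
    _ ≤ (b * ((m + 1 - r : ℕ) : ℝ)) ^ r / (Nat.factorial r : ℝ) := by
        gcongr
    _ = b ^ r * (((m + 1 - r : ℕ) : ℝ) ^ r / (Nat.factorial r : ℝ)) := by rw [mul_pow]; ring
    _ ≤ b ^ r * (Nat.choose m r : ℝ) := by
        apply mul_le_mul_of_nonneg_left h2 (by positivity)

lemma ennreal_step (x y : ℝ) (c : ℕ) (hc : 0 < c) (hx : 0 ≤ x) (h : x ≤ y * c) :
    ENNReal.ofReal x / (c : ℝ≥0∞) ≤ ENNReal.ofReal y := by
  rw [ENNReal.div_le_iff (by exact_mod_cast hc.ne') (ENNReal.natCast_ne_top c)]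
  calc ENNReal.ofReal x ≤ ENNReal.ofReal (y * c) := ENNReal.ofReal_le_ofReal h
    _ = ENNReal.ofReal y * ENNReal.ofReal c := ENNReal.ofReal_mul' (by positivity)
    _ = ENNReal.ofReal y * c := by rw [ENNReal.ofReal_natCast]

lemma final_numeric (d r : ℕ) (hd : 54000 ≤ d) (hr : r = d / 140) :
    2 * (3/4 : ℝ) ^ r < 1 / (3 * Real.exp 1 * (d : ℝ) ^ 3) := by
  have hr385 : 385 ≤ r := by omega
  have h12 : 12 ≤ r := by omega
  have hd140 : (d : ℝ) ≤ 140 * ((r : ℝ) + 1) := by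
    have : d < 140 * (r + 1) := by omega
    have := (Nat.cast_lt (α := ℝ)).mpr this
    push_cast at this
    linarith
  have hnat : Nat.choose r 12 * 3 ^ (r - 12) ≤ 4 ^ r := by
    have hpow : (4 : ℕ) ^ r = (3 + 1) ^ r := by norm_num
    rw [hpow, add_pow]
    have hmem : r - 12 ∈ Finset.range (r + 1) := by simp
    calc Nat.choose r 12 * 3 ^ (r - 12)
        = 3 ^ (r - 12) * 1 ^ (r - (r - 12)) * Nat.choose r (r - 12) := by
          rw [Nat.choose_symm h12]; ring
      _ ≤ _ := Finset.single_le_sum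
          (f := fun k => 3 ^ k * 1 ^ (r - k) * Nat.choose r k)
          (fun i _ => Nat.zero_le _) hmem
  have hchoose : ((r : ℝ) - 11) ^ 12 / 479001600 ≤ (Nat.choose r 12 : ℝ) := by
    have h := Nat.pow_le_choose (α := ℝ) 12 r
    have hc : ((r + 1 - 12 : ℕ) : ℝ) = (r : ℝ) - 11 := by
      have h' : r + 1 - 12 = r - 11 := by omega
      rw [h', Nat.cast_sub (by omega)]
      norm_num
    rw [hc] at h
    calc ((r : ℝ) - 11) ^ 12 / 479001600
        = ((r:ℝ) - 11) ^ 12 / (Nat.factorial 12 : ℝ) := by norm_num [Nat.factorial]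
      _ ≤ _ := h
  have hcast : (Nat.choose r 12 : ℝ) * 3 ^ (r - 12) ≤ 4 ^ r := by exact_mod_cast hnat
  have hX : ((r : ℝ) - 11) ^ 12 / (479001600 * 531441) ≤ (4 / 3 : ℝ) ^ r := by
    have h3r : (3 : ℝ) ^ r = 3 ^ (r - 12) * 3 ^ 12 := by
      rw [← pow_add]; congr 1; omega
    rw [div_pow, h3r, div_le_div_iff₀ (by positivity) (by positivity)]
    have hx : ((r:ℝ)-11)^12 ≤ 479001600 * (Nat.choose r 12 : ℝ) := by
      rw [div_le_iff₀ (by norm_num)] at hchoose; linarith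
    calc ((r:ℝ)-11)^12 * (3^(r-12) * 3^12)
        ≤ (479001600 * (Nat.choose r 12:ℝ)) * (3^(r-12) * 3^12) := by
          have h0 : (0:ℝ) ≤ 3^(r-12) * 3^12 := by positivity
          exact mul_le_mul_of_nonneg_right hx h0
      _ = (479001600 * 3^12) * ((Nat.choose r 12:ℝ) * 3^(r-12)) := by ring
      _ ≤ (479001600 * 3^12) * 4^r := by
          have h0 : (0:ℝ) ≤ 479001600 * 3^12 := by positivity
          exact mul_le_mul_of_nonneg_left hcast h0
      _ = 4^r * (479001600 * 531441) := by norm_num; ring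
  -- now combine
  have hrpos : (0:ℝ) < (r:ℝ) - 11 := by
    have : (385:ℝ) ≤ (r:ℝ) := by exact_mod_cast hr385
    linarith
  have he : Real.exp 1 < 2.7182818286 := Real.exp_one_lt_d9
  have hepos : (0:ℝ) < Real.exp 1 := Real.exp_pos 1
  have hdpos : (0:ℝ) < (d:ℝ) := by positivity
  have h43pos : (0:ℝ) < (4/3:ℝ)^r := by positivity
  -- key: 2 * (3*e*d^3) < (4/3)^r
  have hkey : 2 * (3 * Real.exp 1 * (d:ℝ)^3) < (4/3:ℝ)^r := by
    have hub : 2 * (3 * Real.exp 1 * (d:ℝ)^3) < 16.31 * (140 * ((r:ℝ)+1))^3 := by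
      have hd3 : (d:ℝ)^3 ≤ (140 * ((r:ℝ)+1))^3 := by
        apply pow_le_pow_left₀ (le_of_lt hdpos) hd140
      have h1 : (0:ℝ) < (140 * ((r:ℝ)+1))^3 := by positivity
      nlinarith [hd3, pow_pos hdpos 3]
    have hr1 : (r:ℝ) + 1 ≤ (386/374 : ℝ) * ((r:ℝ) - 11) := by
      have : (385:ℝ) ≤ (r:ℝ) := by exact_mod_cast hr385
      nlinarith
    have hstep : 16.31 * (140 * ((r:ℝ)+1))^3 ≤ 16.31 * 140^3 * (386/374:ℝ)^3 * ((r:ℝ)-11)^3 := by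
      have h2 : ((r:ℝ)+1)^3 ≤ ((386/374:ℝ) * ((r:ℝ)-11))^3 := by
        apply pow_le_pow_left₀ (by positivity) hr1
      nlinarith [h2]
    have hnum : 16.31 * 140^3 * (386/374:ℝ)^3 * (479001600 * 531441) ≤ ((r:ℝ)-11)^9 := by
      have h374 : (374:ℝ) ≤ (r:ℝ) - 11 := by
        have : (385:ℝ) ≤ (r:ℝ) := by exact_mod_cast hr385
        linarith
      have h9 : (374:ℝ)^9 ≤ ((r:ℝ)-11)^9 := pow_le_pow_left₀ (by norm_num) h374 9
      have : (16.31 * 140^3 * (386/374:ℝ)^3 * (479001600 * 531441) : ℝ) ≤ (374:ℝ)^9 := by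
        norm_num
      linarith
    have hfin : 16.31 * 140^3 * (386/374:ℝ)^3 * ((r:ℝ)-11)^3 ≤ ((r:ℝ)-11)^12 / (479001600 * 531441) := by
      rw [le_div_iff₀ (by norm_num)]
      have h12eq : ((r:ℝ)-11)^12 = ((r:ℝ)-11)^9 * ((r:ℝ)-11)^3 := by rw [← pow_add]
      rw [h12eq]
      have h3pos : (0:ℝ) < ((r:ℝ)-11)^3 := by positivity
      calc 16.31 * 140^3 * (386/374:ℝ)^3 * ((r:ℝ)-11)^3 * (479001600 * 531441)
          = (16.31 * 140^3 * (386/374:ℝ)^3 * (479001600 * 531441)) * ((r:ℝ)-11)^3 := by ring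
        _ ≤ ((r:ℝ)-11)^9 * ((r:ℝ)-11)^3 := mul_le_mul_of_nonneg_right hnum (le_of_lt h3pos)
    calc 2 * (3 * Real.exp 1 * (d:ℝ)^3) < 16.31 * (140 * ((r:ℝ)+1))^3 := hub
      _ ≤ 16.31 * 140^3 * (386/374:ℝ)^3 * ((r:ℝ)-11)^3 := hstep
      _ ≤ ((r:ℝ)-11)^12 / (479001600 * 531441) := hfin
      _ ≤ (4/3:ℝ)^r := hX
  -- conclude
  have h34 : (3/4:ℝ)^r = ((4/3:ℝ)^r)⁻¹ := by
    rw [← inv_pow]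
    norm_num
  rw [h34, lt_div_iff₀ (by positivity)]
  have heq : 2 * ((4/3:ℝ)^r)⁻¹ * (3 * Real.exp 1 * (d:ℝ)^3)
      = (2 * (3 * Real.exp 1 * (d:ℝ)^3)) / (4/3:ℝ)^r := by ring
  rw [heq, div_lt_one h43pos]
  exact hkey

/-- For a `d`-regular graph with `d ≥ 54000`, `k = 0.025`, `u = 0.131`, `K = ⌈kd⌉`,
a fixed vertex `v`, arbitrarily fixed colours in `[K]²` on `V \ N_G(v)` and independent
uniformly random colours from `[K]²` on `N_G(v)`, the random variable
`Z = |U*(v)|`, where `U*(v) = {w ∈ N_G(v) : ∃ w' ∈ (N_G(w) ∪ N_G(v)) \ {w},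
C_{w'} = C_w}`, satisfies `P(Z ≥ ud) < 1/(3ed³)`. -/
theorem uncoloured_neighbours_bound
    {V : Type*} [Fintype V] (G : SimpleGraph V) [DecidableRel G.Adj]
    (d : ℕ) (hd : 54000 ≤ d) (hreg : G.IsRegularOfDegree d)
    (v : V)
    {Ω : Type*} [MeasureSpace Ω] [IsProbabilityMeasure (ℙ : Measure Ω)]
    (C : V → Ω → ℕ × ℕ) (hmeas : ∀ w, Measurable (C w))
    (hindep : iIndepFun C ℙ)
    (hfix : ∀ w ∉ G.neighborSet v,
      ∃ a ∈ Finset.Icc 1 (⌈(0.025 : ℝ) * d⌉₊) ×ˢ Finset.Icc 1 (⌈(0.025 : ℝ) * d⌉₊),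
        ∀ ω : Ω, C w ω = a)
    (hunif : ∀ w ∈ G.neighborSet v, ∀ a : ℕ × ℕ, ℙ {ω | C w ω = a} =
      if a ∈ Finset.Icc 1 (⌈(0.025 : ℝ) * d⌉₊) ×ˢ Finset.Icc 1 (⌈(0.025 : ℝ) * d⌉₊)
      then ((⌈(0.025 : ℝ) * d⌉₊ : ℝ≥0∞) ^ 2)⁻¹ else 0) :
    ℙ {ω | (0.131 : ℝ) * d ≤
        (({w ∈ G.neighborSet v | ∃ w' ∈ (G.neighborSet w ∪ G.neighborSet v) \ {w},
          C w' ω = C w ω}).ncard : ℝ)} <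
      ENNReal.ofReal (1 / (3 * Real.exp 1 * (d : ℝ) ^ 3)) := by
  classical
  set K : ℕ := ⌈(0.025 : ℝ) * d⌉₊ with hK
  set SS : Finset (ℕ × ℕ) := Finset.Icc 1 K ×ˢ Finset.Icc 1 K with hSS
  have hdpos : 0 < d := by omega
  have hdR : (54000 : ℝ) ≤ (d : ℝ) := by exact_mod_cast hd
  have hKge : (0.025 : ℝ) * d ≤ K := Nat.le_ceil _
  have hKpos : 0 < K := by
    rw [hK, Nat.ceil_pos]
    positivity
  have hKR : (0 : ℝ) < K := by exact_mod_cast hKpos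
  set κ : ℕ := K ^ 2 with hκdef
  have hκpos : 0 < κ := by positivity
  have hSScard : SS.card = κ := by
    rw [hSS, Finset.card_product, Nat.card_Icc, hκdef]
    simp [sq]
  have hκcast : ((κ : ℝ≥0∞))⁻¹ = ((K : ℝ≥0∞) ^ 2)⁻¹ := by
    rw [hκdef]; push_cast; ring_nf
  set N : Finset V := G.neighborFinset v with hN
  have hNcard : N.card = d := by
    rw [hN, SimpleGraph.card_neighborFinset_eq_degree]
    exact hreg v
  have hNS : ∀ w, w ∈ N ↔ w ∈ G.neighborSet v := by
    intro w
    rw [hN, SimpleGraph.mem_neighborFinset, SimpleGraph.mem_neighborSet]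
  -- probability facts
  have hprob_le : ∀ w ∈ N, ∀ a : ℕ × ℕ, ℙ {ω | C w ω = a} ≤ ((κ : ℝ≥0∞))⁻¹ := by
    intro w hw a
    rw [hκcast, hunif w ((hNS w).mp hw) a]
    split <;> simp
  have hprob_null : ∀ w ∈ N, ℙ {ω | C w ω ∉ SS} = 0 := by
    intro w hw
    have hcov : {ω | C w ω ∉ SS} ⊆ ⋃ a ∈ {a : ℕ × ℕ | a ∉ SS}, {ω | C w ω = a} := by
      intro ω hω
      exact Set.mem_biUnion hω rfl
    refine measure_mono_null hcov ?_
    refine (measure_biUnion_null_iff (Set.to_countable _)).mpr ?_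
    intro a ha
    rw [hunif w ((hNS w).mp hw) a, if_neg ha]
  -- fixed colours
  have hfix' : ∀ w : V, ∃ a : ℕ × ℕ, w ∉ G.neighborSet v → a ∈ SS ∧ ∀ ω, C w ω = a := by
    intro w
    by_cases h : w ∈ G.neighborSet v
    · exact ⟨(0, 0), fun h' => absurd h h'⟩
    · obtain ⟨a, ha, haω⟩ := hfix w h
      exact ⟨a, fun _ => ⟨ha, haω⟩⟩
  choose fc hfc using hfix'
  set A : V → Finset (ℕ × ℕ) :=
    fun w => (((G.neighborFinset w ∪ N).erase w) \ N).image fc with hA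
  have hAcard : ∀ w, (A w).card ≤ d := by
    intro w
    have hsub : (((G.neighborFinset w ∪ N).erase w) \ N) ⊆ G.neighborFinset w := by
      intro x hx
      rw [Finset.mem_sdiff, Finset.mem_erase, Finset.mem_union] at hx
      rcases hx.1.2 with h | h
      · exact h
      · exact absurd h hx.2
    calc (A w).card ≤ (((G.neighborFinset w ∪ N).erase w) \ N).card := Finset.card_image_le
      _ ≤ (G.neighborFinset w).card := Finset.card_le_card hsub
      _ = d := by rw [SimpleGraph.card_neighborFinset_eq_degree]; exact hreg w
  set B1 : Ω → Finset V := fun ω => N.filter (fun w => C w ω ∈ A w) with hB1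
  set B2 : Ω → Finset V :=
    fun ω => N.filter (fun w => ∃ w' ∈ N.erase w, C w' ω = C w ω) with hB2
  set Bad : Ω → Finset V :=
    fun ω => N.filter
      (fun w => ∃ w' ∈ (G.neighborFinset w ∪ N).erase w, C w' ω = C w ω) with hBad
  have hBadSet : ∀ ω : Ω,
      {w ∈ G.neighborSet v | ∃ w' ∈ (G.neighborSet w ∪ G.neighborSet v) \ {w},
        C w' ω = C w ω} = ↑(Bad ω) := by
    intro ω
    ext w
    constructor
    · rintro ⟨hwv, w', hw', hcol⟩
      rw [Set.mem_diff, Set.mem_union, Set.mem_singleton_iff] at hw'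
      rw [Finset.mem_coe, hBad, Finset.mem_filter]
      refine ⟨(hNS w).mpr hwv, w', ?_, hcol⟩
      rw [Finset.mem_erase, Finset.mem_union]
      refine ⟨hw'.2, ?_⟩
      rcases hw'.1 with h | h
      · left; exact (SimpleGraph.mem_neighborFinset _ _ _).mpr h
      · right; exact (hNS w').mpr h
    · intro hw
      rw [Finset.mem_coe, hBad, Finset.mem_filter] at hw
      obtain ⟨hwN, w', hw', hcol⟩ := hw
      rw [Finset.mem_erase, Finset.mem_union] at hw'
      refine ⟨(hNS w).mp hwN, w', ?_, hcol⟩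
      rw [Set.mem_diff, Set.mem_union, Set.mem_singleton_iff]
      refine ⟨?_, hw'.1⟩
      rcases hw'.2 with h | h
      · left; exact (SimpleGraph.mem_neighborFinset _ _ _).mp h
      · right; exact (hNS w').mp h
  have hBadcard : ∀ ω, (Bad ω).card ≤ (B1 ω).card + (B2 ω).card := by
    intro ω
    have hsub : Bad ω ⊆ B1 ω ∪ B2 ω := by
      intro w hw
      rw [hBad, Finset.mem_filter] at hw
      obtain ⟨hwN, w', hw', hcol⟩ := hw
      rw [Finset.mem_erase, Finset.mem_union] at hw'
      rw [Finset.mem_union, hB1, hB2, Finset.mem_filter, Finset.mem_filter]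
      by_cases hw'N : w' ∈ N
      · right
        exact ⟨hwN, w', Finset.mem_erase.mpr ⟨hw'.1, hw'N⟩, hcol⟩
      · left
        refine ⟨hwN, ?_⟩
        have hw'NS : w' ∉ G.neighborSet v := fun h => hw'N ((hNS w').mpr h)
        obtain ⟨hfcSS, hfceq⟩ := hfc w' hw'NS
        have : C w ω = fc w' := by rw [← hcol, hfceq ω]
        rw [this, hA]
        apply Finset.mem_image_of_mem
        rw [Finset.mem_sdiff, Finset.mem_erase, Finset.mem_union]
        exact ⟨⟨hw'.1, hw'.2⟩, hw'N⟩
    calc (Bad ω).card ≤ (B1 ω ∪ B2 ω).card := Finset.card_le_card hsub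
      _ ≤ (B1 ω).card + (B2 ω).card := Finset.card_union_le _ _
  set r : ℕ := d / 140 with hr
  set A0 : ℕ := ⌈(0.047 : ℝ) * d⌉₊ with hA0
  set L0 : ℕ := ⌈(0.028 : ℝ) * d⌉₊ with hL0
  have hrR : (r : ℝ) * 140 ≤ (d : ℝ) := by
    have : r * 140 ≤ d := by omega
    exact_mod_cast this
  set E1 : Set Ω := {ω | (0.047 : ℝ) * d ≤ ((B1 ω).card : ℝ)} with hE1
  set E2 : Set Ω := {ω | (0.084 : ℝ) * d ≤ ((B2 ω).card : ℝ)} with hE2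
  have hsplit : {ω | (0.131 : ℝ) * d ≤
      (({w ∈ G.neighborSet v | ∃ w' ∈ (G.neighborSet w ∪ G.neighborSet v) \ {w},
        C w' ω = C w ω}).ncard : ℝ)} ⊆ E1 ∪ E2 := by
    intro ω hω
    simp only [Set.mem_setOf_eq] at hω
    rw [hBadSet ω, Set.ncard_coe_finset] at hω
    by_contra hcon
    rw [hE1, hE2, Set.mem_union] at hcon
    push_neg at hcon
    simp only [Set.mem_setOf_eq, not_le] at hcon
    have h1 := hBadcard ω
    have h1R : ((Bad ω).card : ℝ) ≤ ((B1 ω).card : ℝ) + ((B2 ω).card : ℝ) := by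
      exact_mod_cast h1
    linarith [hcon.1, hcon.2]
  -- generally useful facts
  have hκRpos : (0:ℝ) < (κ:ℝ) := by exact_mod_cast hκpos
  have hrdR : (r : ℝ) ≤ (d : ℝ) / 140 := by linarith [hrR]
  have hκR2 : ((0.025:ℝ) * d)^2 ≤ (κ:ℝ) := by
    have hh : (κ:ℝ) = (K:ℝ)^2 := by rw [hκdef]; push_cast; ring
    rw [hh]
    apply pow_le_pow_left₀ (by positivity) hKge
  have hdd : (d:ℝ) * ((d:ℝ) * (κ:ℝ)⁻¹) ≤ 1600 := by
    have hinv : (κ:ℝ)⁻¹ ≤ (((0.025:ℝ)*d)^2)⁻¹ :=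
      inv_anti₀ (by positivity) hκR2
    have h2 : (d:ℝ) * ((d:ℝ) * (κ:ℝ)⁻¹) ≤ (d:ℝ) * ((d:ℝ) * (((0.025:ℝ)*d)^2)⁻¹) := by
      gcongr
    refine h2.trans ?_
    have hdne : (d:ℝ) ≠ 0 := by positivity
    rw [show ((0.025:ℝ)*d)^2 = 0.000625 * (d:ℝ)^2 by ring]
    have hdne : (d:ℝ) ≠ 0 := by positivity
    have heq : (d:ℝ) * ((d:ℝ) * (0.000625 * (d:ℝ)^2)⁻¹) = 1600 := by
      field_simp
      ring
    exact le_of_eq heq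
  -- Bound 1
  have hP1 : ℙ E1 ≤ ENNReal.ofReal ((3/4 : ℝ) ^ r) := by
    set F1 : Finset V → Set Ω := fun s => {ω | ∀ w ∈ s, C w ω ∈ A w} with hF1
    have hF1eq : ∀ s : Finset V, F1 s = ⋂ w ∈ s, (C w) ⁻¹' (A w : Set (ℕ × ℕ)) := by
      intro s
      ext ω
      simp [hF1, Set.mem_iInter]
    have hF1meas : ∀ s ∈ N.powersetCard r, MeasurableSet (F1 s) := by
      intro s _
      rw [hF1eq]
      exact MeasurableSet.biInter s.countable_toSet
        (fun w _ => hmeas w (measurableSet_of_countable' _))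
    have hrA0R : (r : ℝ) ≤ (A0 : ℝ) := by
      have h2 : (0.047 : ℝ) * d ≤ A0 := Nat.le_ceil _
      linarith
    have hrA0 : r ≤ A0 := by exact_mod_cast hrA0R
    have hc1pos : 0 < Nat.choose A0 r := Nat.choose_pos hrA0
    have hmarkov : ℙ E1 ≤ (∑ s ∈ N.powersetCard r, ℙ (F1 s)) / (Nat.choose A0 r) := by
      apply count_markov _ _ hF1meas _ _ hc1pos
      intro ω hω
      refine ⟨(B1 ω).powersetCard r, ?_, ?_, ?_⟩
      · exact Finset.powersetCard_mono (Finset.filter_subset _ _)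
      · rw [Finset.card_powersetCard]
        exact Nat.choose_le_choose r (Nat.ceil_le.mpr hω)
      · intro s hs
        rw [Finset.mem_powersetCard] at hs
        intro w hw
        exact (Finset.mem_filter.mp (hs.1 hw)).2
    have hsum : (∑ s ∈ N.powersetCard r, ℙ (F1 s)) ≤
        (Nat.choose d r : ℝ≥0∞) * ((d : ℝ≥0∞) * ((κ : ℝ≥0∞))⁻¹) ^ r := by
      have hterm : ∀ s ∈ N.powersetCard r,
          ℙ (F1 s) ≤ ((d : ℝ≥0∞) * ((κ : ℝ≥0∞))⁻¹) ^ r := by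
        intro s hs
        rw [Finset.mem_powersetCard] at hs
        rw [hF1eq]
        rw [hindep.meas_biInter
          (fun w _ => ⟨(A w : Set (ℕ × ℕ)), measurableSet_of_countable' _, rfl⟩)]
        calc ∏ w ∈ s, ℙ ((C w) ⁻¹' (A w : Set (ℕ×ℕ)))
            ≤ ((d : ℝ≥0∞) * ((κ : ℝ≥0∞))⁻¹) ^ s.card := by
              apply Finset.prod_le_pow_card
              intro w hw
              have hwN : w ∈ N := hs.1 hw
              have hcov : (C w) ⁻¹' (A w : Set (ℕ×ℕ)) ⊆ ⋃ a ∈ A w, {ω | C w ω = a} := by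
                intro ω hω
                exact Set.mem_biUnion hω rfl
              refine le_trans (measure_mono hcov) ?_
              refine le_trans (measure_biUnion_finset_le _ _) ?_
              calc ∑ a ∈ A w, ℙ {ω | C w ω = a} ≤ ∑ _a ∈ A w, ((κ : ℝ≥0∞))⁻¹ :=
                    Finset.sum_le_sum (fun a _ => hprob_le w hwN a)
                _ = ((A w).card : ℝ≥0∞) * ((κ : ℝ≥0∞))⁻¹ := by
                    rw [Finset.sum_const, nsmul_eq_mul]
                _ ≤ (d : ℝ≥0∞) * ((κ : ℝ≥0∞))⁻¹ := by
                    gcongr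
                    exact_mod_cast hAcard w
          _ = ((d : ℝ≥0∞) * ((κ : ℝ≥0∞))⁻¹) ^ r := by rw [hs.2]
      calc (∑ s ∈ N.powersetCard r, ℙ (F1 s))
          ≤ ∑ _s ∈ N.powersetCard r, ((d : ℝ≥0∞) * ((κ : ℝ≥0∞))⁻¹) ^ r :=
            Finset.sum_le_sum hterm
        _ = ((N.powersetCard r).card : ℝ≥0∞) * ((d : ℝ≥0∞) * ((κ : ℝ≥0∞))⁻¹) ^ r := by
            rw [Finset.sum_const, nsmul_eq_mul]
        _ = (Nat.choose d r : ℝ≥0∞) * ((d : ℝ≥0∞) * ((κ : ℝ≥0∞))⁻¹) ^ r := by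
            rw [Finset.card_powersetCard, hNcard]
    have hofreal : (Nat.choose d r : ℝ≥0∞) * ((d : ℝ≥0∞) * ((κ : ℝ≥0∞))⁻¹) ^ r
        = ENNReal.ofReal ((Nat.choose d r : ℝ) * ((d : ℝ) * ((κ : ℝ))⁻¹) ^ r) := by
      rw [ENNReal.ofReal_mul (by positivity), ENNReal.ofReal_pow (by positivity),
        ENNReal.ofReal_mul (by positivity), ENNReal.ofReal_inv_of_pos hκRpos,
        ENNReal.ofReal_natCast, ENNReal.ofReal_natCast, ENNReal.ofReal_natCast]
    have hreal : (Nat.choose d r : ℝ) * ((d : ℝ) * ((κ : ℝ))⁻¹) ^ r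
        ≤ (3/4 : ℝ) ^ r * (Nat.choose A0 r : ℝ) := by
      apply choose_ratio
      · positivity
      · norm_num
      · have hm1cast : ((A0 + 1 - r : ℕ) : ℝ) = (A0:ℝ) + 1 - (r:ℝ) := by
          rw [Nat.cast_sub (by omega : r ≤ A0 + 1)]
          push_cast; ring
        rw [hm1cast]
        have hA0ge : (0.047:ℝ) * d ≤ (A0:ℝ) := Nat.le_ceil _
        have : (1600:ℝ) ≤ 3/4 * ((A0:ℝ) + 1 - (r:ℝ)) := by linarith
        linarith [hdd]
    calc ℙ E1 ≤ (∑ s ∈ N.powersetCard r, ℙ (F1 s)) / (Nat.choose A0 r) := hmarkov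
      _ ≤ ((Nat.choose d r : ℝ≥0∞) * ((d : ℝ≥0∞) * ((κ : ℝ≥0∞))⁻¹) ^ r)
            / (Nat.choose A0 r) := ENNReal.div_le_div_right hsum _
      _ = ENNReal.ofReal ((Nat.choose d r : ℝ) * ((d : ℝ) * ((κ : ℝ))⁻¹) ^ r)
            / (Nat.choose A0 r) := by rw [hofreal]
      _ ≤ ENNReal.ofReal ((3/4 : ℝ) ^ r) :=
          ennreal_step _ _ _ hc1pos (by positivity) hreal
  -- Bound 2
  have hP2 : ℙ E2 ≤ ENNReal.ofReal ((3/4 : ℝ) ^ r) := by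
    obtain ⟨ord, hord⟩ : ∃ ord : V → ℕ, Function.Injective ord :=
      ⟨fun x => ((Fintype.equivFin V) x : ℕ),
        fun a b h => (Fintype.equivFin V).injective (Fin.val_injective h)⟩
    set PN : Finset (V × V) := (N ×ˢ N).filter (fun p => ord p.1 < ord p.2) with hPN
    have hPNmem : ∀ p ∈ PN, p.1 ∈ N ∧ p.2 ∈ N ∧ ord p.1 < ord p.2 := by
      intro p hp
      rw [hPN, Finset.mem_filter, Finset.mem_product] at hp
      exact ⟨hp.1.1, hp.1.2, hp.2⟩
    set 𝓢₂ : Finset (Finset (V × V)) := (PN.powersetCard r).filter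
      (fun M => ∀ p ∈ M, ∀ q ∈ M, p ≠ q →
        p.1 ≠ q.1 ∧ p.1 ≠ q.2 ∧ p.2 ≠ q.1 ∧ p.2 ≠ q.2) with h𝓢₂
    set F2 : Finset (V × V) → Set Ω := fun M => {ω | ∀ p ∈ M, C p.1 ω = C p.2 ω} with hF2
    have hF2meas : ∀ M ∈ 𝓢₂, MeasurableSet (F2 M) := by
      intro M _
      have h1 : F2 M = ⋂ p ∈ M, {ω | C p.1 ω = C p.2 ω} := by
        ext ω; simp [hF2, Set.mem_iInter]
      rw [h1]
      refine MeasurableSet.biInter M.countable_toSet (fun p _ => ?_)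
      have h2 : {ω | C p.1 ω = C p.2 ω}
          = (fun ω => (C p.1 ω, C p.2 ω)) ⁻¹' {x : (ℕ×ℕ) × (ℕ×ℕ) | x.1 = x.2} := rfl
      rw [h2]
      exact ((hmeas p.1).prodMk (hmeas p.2)) (measurableSet_of_countable' _)
    have hrL0R : (r : ℝ) ≤ (L0 : ℝ) := by
      have h2 : (0.028 : ℝ) * d ≤ L0 := Nat.le_ceil _
      linarith
    have hrL0 : r ≤ L0 := by exact_mod_cast hrL0R
    have hc2pos : 0 < Nat.choose L0 r := Nat.choose_pos hrL0
    have hmarkov : ℙ E2 ≤ (∑ M ∈ 𝓢₂, ℙ (F2 M)) / (Nat.choose L0 r) := by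
      apply count_markov _ _ hF2meas _ _ hc2pos
      intro ω hω
      set cls : ℕ × ℕ → Finset V := fun c => N.filter (fun w => C w ω = c) with hcls
      have hclsmem : ∀ c, ∀ w ∈ cls c, w ∈ N ∧ C w ω = c := by
        intro c w hw
        rw [hcls, Finset.mem_filter] at hw
        exact hw
      choose P hP using fun c : ℕ × ℕ => exists_pairing ord hord (cls c)
      set CS2 : Finset (ℕ × ℕ) :=
        (N.image (fun w => C w ω)).filter (fun c => 2 ≤ (cls c).card) with hCS2
      set MM : Finset (V × V) := CS2.biUnion P with hMM
      have hMMmem : ∀ p ∈ MM, ∃ c, p ∈ P c ∧ p.1 ∈ cls c ∧ p.2 ∈ cls c ∧ ord p.1 < ord p.2 := by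
        intro p hp
        obtain ⟨c, _, hpc⟩ := Finset.mem_biUnion.mp hp
        obtain ⟨h1, h2, h3⟩ := (hP c).1 p hpc
        exact ⟨c, hpc, h1, h2, h3⟩
      have hMMsub : MM ⊆ PN := by
        intro p hp
        obtain ⟨c, _, h1, h2, h3⟩ := hMMmem p hp
        rw [hPN, Finset.mem_filter, Finset.mem_product]
        exact ⟨⟨(hclsmem c p.1 h1).1, (hclsmem c p.2 h2).1⟩, h3⟩
      have hMMmono : ∀ p ∈ MM, C p.1 ω = C p.2 ω := by
        intro p hp
        obtain ⟨c, _, h1, h2, _⟩ := hMMmem p hp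
        rw [(hclsmem c p.1 h1).2, (hclsmem c p.2 h2).2]
      have hMMdisj : ∀ p ∈ MM, ∀ q ∈ MM, p ≠ q →
          p.1 ≠ q.1 ∧ p.1 ≠ q.2 ∧ p.2 ≠ q.1 ∧ p.2 ≠ q.2 := by
        intro p hp q hq hpq
        obtain ⟨c1, hpc1, hp1, hp2, _⟩ := hMMmem p hp
        obtain ⟨c2, hqc2, hq1, hq2, _⟩ := hMMmem q hq
        by_cases hc : c1 = c2
        · subst hc
          exact (hP c1).2.1 p hpc1 q hqc2 hpq
        · have e1 := (hclsmem c1 p.1 hp1).2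
          have e2 := (hclsmem c1 p.2 hp2).2
          have e3 := (hclsmem c2 q.1 hq1).2
          have e4 := (hclsmem c2 q.2 hq2).2
          refine ⟨?_, ?_, ?_, ?_⟩ <;>
            · intro he
              apply hc
              first
                | rw [← e1, he, e3]
                | rw [← e1, he, e4]
                | rw [← e2, he, e3]
                | rw [← e2, he, e4]
      have hPdisj : ∀ c1 ∈ CS2, ∀ c2 ∈ CS2, c1 ≠ c2 → Disjoint (P c1) (P c2) := by
        intro c1 _ c2 _ hc
        rw [Finset.disjoint_left]
        intro p hp1 hp2
        have e1 := (hclsmem c1 p.1 ((hP c1).1 p hp1).1).2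
        have e2 := (hclsmem c2 p.1 ((hP c2).1 p hp2).1).2
        exact hc (by rw [← e1, e2])
      have hclsdisj : ∀ c1 ∈ CS2, ∀ c2 ∈ CS2, c1 ≠ c2 → Disjoint (cls c1) (cls c2) := by
        intro c1 _ c2 _ hc
        rw [Finset.disjoint_left]
        intro w hw1 hw2
        exact hc (by rw [← (hclsmem c1 w hw1).2, (hclsmem c2 w hw2).2])
      have hMMcard : MM.card = ∑ c ∈ CS2, (P c).card := Finset.card_biUnion hPdisj
      have hB2eq : B2 ω = CS2.biUnion cls := by
        ext w
        constructor
        · intro hw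
          rw [hB2, Finset.mem_filter] at hw
          obtain ⟨hwN, w', hw', hcol⟩ := hw
          rw [Finset.mem_erase] at hw'
          set c := C w ω with hc
          have hwc : w ∈ cls c := by
            rw [hcls, Finset.mem_filter]; exact ⟨hwN, rfl⟩
          have hw'c : w' ∈ cls c := by
            rw [hcls, Finset.mem_filter]; exact ⟨hw'.2, hcol⟩
          refine Finset.mem_biUnion.mpr ⟨c, ?_, hwc⟩
          rw [hCS2, Finset.mem_filter]
          refine ⟨Finset.mem_image.mpr ⟨w, hwN, rfl⟩, ?_⟩
          exact Finset.one_lt_card.mpr ⟨w, hwc, w', hw'c, fun he => hw'.1 he.symm⟩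
        · intro hw
          obtain ⟨c, hcCS, hwc⟩ := Finset.mem_biUnion.mp hw
          rw [hCS2, Finset.mem_filter] at hcCS
          obtain ⟨w', hw'c, hw'ne⟩ := Finset.exists_mem_ne (by omega : 1 < (cls c).card) w
          rw [hB2, Finset.mem_filter]
          refine ⟨(hclsmem c w hwc).1, w', ?_, ?_⟩
          · rw [Finset.mem_erase]
            exact ⟨hw'ne, (hclsmem c w' hw'c).1⟩
          · rw [(hclsmem c w' hw'c).2, (hclsmem c w hwc).2]
      have hB2card : (B2 ω).card = ∑ c ∈ CS2, (cls c).card := by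
        rw [hB2eq]; exact Finset.card_biUnion hclsdisj
      have hsum3 : (B2 ω).card ≤ 3 * MM.card := by
        rw [hB2card, hMMcard, Finset.mul_sum]
        refine Finset.sum_le_sum (fun c hc => ?_)
        have h2c : 2 ≤ (cls c).card := by
          rw [hCS2, Finset.mem_filter] at hc
          exact hc.2
        have hpair := (hP c).2.2
        omega
      have hL0MM : L0 ≤ MM.card := by
        rw [hL0]
        apply Nat.ceil_le.mpr
        rw [hE2, Set.mem_setOf_eq] at hω
        have h1 : ((B2 ω).card : ℝ) ≤ 3 * (MM.card : ℝ) := by exact_mod_cast hsum3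
        linarith
      refine ⟨MM.powersetCard r, ?_, ?_, ?_⟩
      · intro M hM
        rw [Finset.mem_powersetCard] at hM
        rw [h𝓢₂, Finset.mem_filter, Finset.mem_powersetCard]
        exact ⟨⟨hM.1.trans hMMsub, hM.2⟩,
          fun p hp q hq hpq => hMMdisj p (hM.1 hp) q (hM.1 hq) hpq⟩
      · rw [Finset.card_powersetCard]
        exact Nat.choose_le_choose r hL0MM
      · intro M hM
        rw [Finset.mem_powersetCard] at hM
        intro p hp
        exact hMMmono p (hM.1 hp)
    -- PN card bound
    have hPN2 : 2 * PN.card ≤ d * d := by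
      have hswap : (PN.image Prod.swap).card = PN.card :=
        Finset.card_image_of_injective _ Prod.swap_injective
      have hdisj : Disjoint PN (PN.image Prod.swap) := by
        rw [Finset.disjoint_left]
        intro p hp hp'
        obtain ⟨q, hq, hqe⟩ := Finset.mem_image.mp hp'
        have h1 := (hPNmem p hp).2.2
        have h2 := (hPNmem q hq).2.2
        rw [← hqe] at h1
        simp only [Prod.fst_swap, Prod.snd_swap] at h1
        omega
      have hsub : PN ∪ PN.image Prod.swap ⊆ N ×ˢ N := by
        intro p hp
        rcases Finset.mem_union.mp hp with h | h
        · rw [hPN, Finset.mem_filter] at h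
          exact h.1
        · obtain ⟨q, hq, hqe⟩ := Finset.mem_image.mp h
          have hq' := hPNmem q hq
          rw [← hqe, Finset.mem_product]
          exact ⟨hq'.2.1, hq'.1⟩
      calc 2 * PN.card = PN.card + (PN.image Prod.swap).card := by rw [hswap]; ring
        _ = (PN ∪ PN.image Prod.swap).card := (Finset.card_union_of_disjoint hdisj).symm
        _ ≤ (N ×ˢ N).card := Finset.card_le_card hsub
        _ = d * d := by rw [Finset.card_product, hNcard]
    -- sum bound
    have hsum : (∑ M ∈ 𝓢₂, ℙ (F2 M)) ≤
        (Nat.choose PN.card r : ℝ≥0∞) * ((κ : ℝ≥0∞))⁻¹ ^ r := by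
      have hterm : ∀ M ∈ 𝓢₂, ℙ (F2 M) ≤ ((κ : ℝ≥0∞))⁻¹ ^ r := by
        intro M hM
        rw [h𝓢₂, Finset.mem_filter, Finset.mem_powersetCard] at hM
        refine pair_event_bound C hindep N SS κ hSScard hκpos hprob_le hprob_null M r
          hM.1.2 (fun p hp => ?_) hM.2
        obtain ⟨h1, h2, h3⟩ := hPNmem p (hM.1.1 hp)
        refine ⟨h1, h2, fun he => ?_⟩
        rw [he] at h3
        exact lt_irrefl _ h3
      calc (∑ M ∈ 𝓢₂, ℙ (F2 M)) ≤ ∑ _M ∈ 𝓢₂, ((κ : ℝ≥0∞))⁻¹ ^ r :=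
            Finset.sum_le_sum hterm
        _ = (𝓢₂.card : ℝ≥0∞) * ((κ : ℝ≥0∞))⁻¹ ^ r := by
            rw [Finset.sum_const, nsmul_eq_mul]
        _ ≤ (Nat.choose PN.card r : ℝ≥0∞) * ((κ : ℝ≥0∞))⁻¹ ^ r := by
            gcongr
            have h1 : 𝓢₂.card ≤ (PN.powersetCard r).card :=
              Finset.card_le_card (Finset.filter_subset _ _)
            rw [Finset.card_powersetCard] at h1
            exact_mod_cast h1
    have hofreal : (Nat.choose PN.card r : ℝ≥0∞) * ((κ : ℝ≥0∞))⁻¹ ^ r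
        = ENNReal.ofReal ((Nat.choose PN.card r : ℝ) * (((κ : ℝ))⁻¹) ^ r) := by
      rw [ENNReal.ofReal_mul (by positivity), ENNReal.ofReal_pow (by positivity),
        ENNReal.ofReal_inv_of_pos hκRpos, ENNReal.ofReal_natCast, ENNReal.ofReal_natCast]
    have hreal : (Nat.choose PN.card r : ℝ) * (((κ : ℝ))⁻¹) ^ r
        ≤ (3/4 : ℝ) ^ r * (Nat.choose L0 r : ℝ) := by
      apply choose_ratio
      · positivity
      · norm_num
      · have hm2cast : ((L0 + 1 - r : ℕ) : ℝ) = (L0:ℝ) + 1 - (r:ℝ) := by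
          rw [Nat.cast_sub (by omega : r ≤ L0 + 1)]
          push_cast; ring
        rw [hm2cast]
        have hL0ge : (0.028:ℝ) * d ≤ (L0:ℝ) := Nat.le_ceil _
        have hPNR : (PN.card : ℝ) * (κ:ℝ)⁻¹ ≤ 800 := by
          have h1 : (PN.card : ℝ) ≤ (d:ℝ) * (d:ℝ) / 2 := by
            have h2 : ((2 * PN.card : ℕ) : ℝ) ≤ ((d * d : ℕ) : ℝ) := by exact_mod_cast hPN2
            push_cast at h2
            linarith
          have hinv : (κ:ℝ)⁻¹ ≤ (((0.025:ℝ)*d)^2)⁻¹ :=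
            inv_anti₀ (by positivity) hκR2
          calc (PN.card : ℝ) * (κ:ℝ)⁻¹
              ≤ ((d:ℝ) * d / 2) * (((0.025:ℝ)*d)^2)⁻¹ := by
                apply mul_le_mul h1 hinv (by positivity) (by positivity)
            _ = 800 := by
                rw [show ((0.025:ℝ)*d)^2 = 0.000625 * (d:ℝ)^2 by ring]
                have hdne : (d:ℝ) ≠ 0 := by positivity
                field_simp
                ring
        have : (800:ℝ) ≤ 3/4 * ((L0:ℝ) + 1 - (r:ℝ)) := by linarith
        linarith
    calc ℙ E2 ≤ (∑ M ∈ 𝓢₂, ℙ (F2 M)) / (Nat.choose L0 r) := hmarkov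
      _ ≤ ((Nat.choose PN.card r : ℝ≥0∞) * ((κ : ℝ≥0∞))⁻¹ ^ r)
            / (Nat.choose L0 r) := ENNReal.div_le_div_right hsum _
      _ = ENNReal.ofReal ((Nat.choose PN.card r : ℝ) * (((κ : ℝ))⁻¹) ^ r)
            / (Nat.choose L0 r) := by rw [hofreal]
      _ ≤ ENNReal.ofReal ((3/4 : ℝ) ^ r) :=
          ennreal_step _ _ _ hc2pos (by positivity) hreal
  calc ℙ {ω | (0.131 : ℝ) * d ≤
      (({w ∈ G.neighborSet v | ∃ w' ∈ (G.neighborSet w ∪ G.neighborSet v) \ {w},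
        C w' ω = C w ω}).ncard : ℝ)}
      ≤ ℙ (E1 ∪ E2) := measure_mono hsplit
    _ ≤ ℙ E1 + ℙ E2 := measure_union_le _ _
    _ ≤ ENNReal.ofReal ((3/4 : ℝ) ^ r) + ENNReal.ofReal ((3/4 : ℝ) ^ r) := add_le_add hP1 hP2
    _ = ENNReal.ofReal (2 * (3/4 : ℝ) ^ r) := by
        rw [← ENNReal.ofReal_add (by positivity) (by positivity)]
        ring_nf
    _ < ENNReal.ofReal (1 / (3 * Real.exp 1 * (d : ℝ) ^ 3)) := by
        rw [ENNReal.ofReal_lt_ofReal_iff (by positivity)]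
        exact final_numeric d r hd hr
end
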